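/- arXiv:math/0105137 — 10 statements merged into one kernel-verified Lean document; each statement's English description precedes it below -/
import Mathlib

section
/- If S is a faithfully flat commutative R-algebra and M is an R-module, then the diagram M → S ⊗_R M ⇉ S ⊗_R S ⊗_R M is an equalizer of R-modules, where the first map sends m to 1 ⊗ m, and the two parallel maps send s ⊗ m to 1 ⊗ s ⊗ m and s ⊗ 1 ⊗ m respectively. -/
/-!
After base change along `S`, the complex `M → S ⊗ M → S ⊗ S ⊗ M` acquires the contracting
homotopy `s ⊗ t ⊗ x ↦ s t ⊗ x`, hence becomes exact; a faithfully flat base change reflects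
exactness.
-/

universe u

open TensorProduct

lemma LinearMap.exact_of_comp_eq_zero_of_homotopy {R M N P : Type*} [Semiring R]
    [AddCommMonoid M] [AddCommMonoid N] [AddCommMonoid P] [Module R M] [Module R N] [Module R P]
    {f : M →ₗ[R] N} {g : N →ₗ[R] P} (hgf : g ∘ₗ f = 0) (s : N →ₗ[R] M) (t : P →ₗ[R] N)
    (hst : t ∘ₗ g + f ∘ₗ s = LinearMap.id) : Function.Exact f g :=
  exact_of_comp_of_mem_range hgf fun y hy ↦
    ⟨s y, by simpa [hy] using LinearMap.congr_fun hst y⟩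

namespace TensorProduct

variable (R S : Type*) [CommRing R] [Ring S] [Algebra R S]

noncomputable def mulLeftFactors (N : Type*) [AddCommMonoid N] [Module R N] :
    S ⊗[R] (S ⊗[R] N) →ₗ[R] S ⊗[R] N :=
  (LinearMap.mul' R S).rTensor N ∘ₗ (TensorProduct.assoc R S S N).symm.toLinearMap

@[simp]
lemma mulLeftFactors_tmul (N : Type*) [AddCommMonoid N] [Module R N] (s t : S) (n : N) :
    mulLeftFactors R S N (s ⊗ₜ (t ⊗ₜ n)) = (s * t) ⊗ₜ n := by
  simp [mulLeftFactors]

variable (M : Type*) [AddCommGroup M] [Module R M]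

noncomputable def amitsurDiff : S ⊗[R] M →ₗ[R] S ⊗[R] (S ⊗[R] M) :=
  TensorProduct.mk R S (S ⊗[R] M) 1 - (TensorProduct.mk R S M 1).lTensor S

lemma amitsurDiff_comp_mk_one : amitsurDiff R S M ∘ₗ TensorProduct.mk R S M 1 = 0 := by
  ext m
  simp [amitsurDiff]

lemma mulLeftFactors_comp_lTensor_amitsurDiff_add :
    mulLeftFactors R S (S ⊗[R] M) ∘ₗ (amitsurDiff R S M).lTensor S +
      (TensorProduct.mk R S M 1).lTensor S ∘ₗ mulLeftFactors R S M = LinearMap.id := by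
  ext s t m
  simp [amitsurDiff]

lemma exact_lTensor_mk_one_amitsurDiff :
    Function.Exact ((TensorProduct.mk R S M 1).lTensor S) ((amitsurDiff R S M).lTensor S) :=
  LinearMap.exact_of_comp_eq_zero_of_homotopy
    (by rw [← LinearMap.lTensor_comp, amitsurDiff_comp_mk_one, LinearMap.lTensor_zero])
    _ _ (mulLeftFactors_comp_lTensor_amitsurDiff_add R S M)

lemma exact_mk_one_amitsurDiff [Module.FaithfullyFlat R S] :
    Function.Exact (TensorProduct.mk R S M 1) (amitsurDiff R S M) :=
  Module.FaithfullyFlat.lTensor_reflects_exact R S _ _ (exact_lTensor_mk_one_amitsurDiff R S M)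

end TensorProduct

theorem faithfully_flat_descent_equalizer
    (R S M : Type u) [CommRing R] [CommRing S] [Algebra R S]
    [Module.FaithfullyFlat R S] [AddCommGroup M] [Module R M] :
    Function.Injective (TensorProduct.mk R S M 1) ∧
    ∀ x : S ⊗[R] M,
      (TensorProduct.mk R S (S ⊗[R] M) 1) x =
        (LinearMap.lTensor S (TensorProduct.mk R S M 1)) x ↔
      x ∈ Set.range (TensorProduct.mk R S M 1) := by
  refine ⟨Module.FaithfullyFlat.tensorProduct_mk_injective M, fun x ↦ ?_⟩
  rw [← TensorProduct.exact_mk_one_amitsurDiff R S M x, TensorProduct.amitsurDiff,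
    LinearMap.sub_apply, sub_eq_zero]
end

section
/- Let {R → S_i} for i in a finite index set be a family of flat ring maps such that the product ∏ S_i is faithfully flat over R, and let M be an R-module. Then the diagram M → ∏_i (S_i ⊗_R M) ⇉ ∏_{j,k} (S_j ⊗_R S_k ⊗_R M) is an equalizer of R-modules, where the two parallel maps are induced by the two coface maps s ⊗ m ↦ 1 ⊗ s ⊗ m and s ⊗ m ↦ s ⊗ 1 ⊗ m. -/
/-!
Write `T = ∏ i, S i`. Since `T` is faithfully flat, it suffices to prove exactness of
`M → ∏ i, S i ⊗ M → ∏ (j, k), S j ⊗ S k ⊗ M` after applying `T ⊗ -`. There the complex is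
contractible: the maps `T ⊗ (S i ⊗ N) → T ⊗ N`, `s ⊗ t ⊗ n ↦ s · Pi.single i t ⊗ n`, summed over
`i`, give a contracting homotopy, because `∑ i, Pi.single i 1 = 1` in `T`.
-/

universe u

open TensorProduct

lemma LinearMap.piMap_single {R ι : Type*} [Semiring R] [DecidableEq ι] {φ ψ : ι → Type*}
    [∀ i, AddCommMonoid (φ i)] [∀ i, Module R (φ i)] [∀ i, AddCommMonoid (ψ i)]
    [∀ i, Module R (ψ i)] (f : ∀ i, φ i →ₗ[R] ψ i) (i : ι) (x : φ i) :
    LinearMap.piMap f (Pi.single i x) = Pi.single i (f i x) :=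
  funext (Pi.apply_single (fun i => f i) (fun i => (f i).map_zero) i x)

lemma LinearMap.exact_of_homotopy {R M N P : Type*} [Semiring R] [AddCommMonoid M]
    [AddCommMonoid N] [AddCommMonoid P] [Module R M] [Module R N] [Module R P]
    {f : M →ₗ[R] N} {g : N →ₗ[R] P} (hgf : ∀ x, g (f x) = 0) (h₀ : N →ₗ[R] M) (h₁ : P →ₗ[R] N)
    (h : ∀ y, h₁ (g y) + f (h₀ y) = y) : Function.Exact f g := by
  refine fun y => ⟨fun hy => ⟨h₀ y, ?_⟩, ?_⟩
  · simpa [hy] using h y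
  · rintro ⟨x, rfl⟩
    exact hgf x

namespace Amitsur

section Cofaces

variable (R : Type*) [CommSemiring R] {ι : Type*} (S : ι → Type*) [∀ i, Semiring (S i)]
  [∀ i, Algebra R (S i)] (M : Type*) [AddCommMonoid M] [Module R M]

noncomputable def unitMap : M →ₗ[R] ∀ i, S i ⊗[R] M :=
  LinearMap.pi fun i => TensorProduct.mk R (S i) M 1

noncomputable def coface₀ : (∀ i, S i ⊗[R] M) →ₗ[R] ∀ p : ι × ι, S p.1 ⊗[R] (S p.2 ⊗[R] M) :=
  LinearMap.pi fun p => TensorProduct.mk R (S p.1) (S p.2 ⊗[R] M) 1 ∘ₗ LinearMap.proj p.2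

noncomputable def coface₁ : (∀ i, S i ⊗[R] M) →ₗ[R] ∀ p : ι × ι, S p.1 ⊗[R] (S p.2 ⊗[R] M) :=
  LinearMap.pi fun p => (TensorProduct.mk R (S p.2) M 1).lTensor (S p.1) ∘ₗ LinearMap.proj p.1

variable {R S M}

lemma coface₀_unitMap_eq_coface₁_unitMap (m : M) :
    coface₀ R S M (unitMap R S M m) = coface₁ R S M (unitMap R S M m) := by
  ext p
  simp [coface₀, coface₁, unitMap]

end Cofaces

section Contraction

variable (R : Type*) [CommSemiring R] {ι : Type*} [Fintype ι] [DecidableEq ι]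
  (S : ι → Type*) [∀ i, Semiring (S i)] [∀ i, Algebra R (S i)]
  (M : Type*) [AddCommMonoid M] [Module R M]

noncomputable def gather : (∀ i, S i ⊗[R] M) →ₗ[R] (∀ i, S i) ⊗[R] M :=
  ∑ i, (LinearMap.single R S i).rTensor M ∘ₗ LinearMap.proj i

noncomputable def contract : (∀ i, S i) ⊗[R] (∀ i, S i ⊗[R] M) →ₗ[R] (∀ i, S i) ⊗[R] M :=
  TensorProduct.lift (Algebra.lsmul R R ((∀ i, S i) ⊗[R] M)).toLinearMap ∘ₗ
    (gather R S M).lTensor (∀ i, S i)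

noncomputable def homotopy₁ :
    (∀ i, S i) ⊗[R] (∀ p : ι × ι, S p.1 ⊗[R] (S p.2 ⊗[R] M)) →ₗ[R]
      (∀ i, S i) ⊗[R] (∀ i, S i ⊗[R] M) :=
  ∑ b, (LinearMap.single R (fun i => S i ⊗[R] M) b).lTensor (∀ i, S i) ∘ₗ
    contract R S (S b ⊗[R] M) ∘ₗ
      (LinearMap.pi fun a => LinearMap.proj (a, b)).lTensor (∀ i, S i)

variable {R S M}

lemma contract_tmul (s : ∀ i, S i) (v : ∀ i, S i ⊗[R] M) :
    contract R S M (s ⊗ₜ v) = s • gather R S M v :=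
  rfl

lemma gather_unitMap (m : M) : gather R S M (unitMap R S M m) = 1 ⊗ₜ m := by
  simp [gather, unitMap, ← TensorProduct.sum_tmul, Finset.univ_sum_single]
  rfl

lemma gather_single (i : ι) (x : S i ⊗[R] M) :
    gather R S M (Pi.single i x) = (LinearMap.single R S i).rTensor M x := by
  rw [gather, LinearMap.sum_apply, Finset.sum_eq_single i] <;> simp_all

lemma contract_lTensor_unitMap (x : (∀ i, S i) ⊗[R] M) :
    contract R S M ((unitMap R S M).lTensor (∀ i, S i) x) = x := by
  induction x with
  | zero => simp
  | add x y hx hy => simp [hx, hy]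
  | tmul s m => simp [contract_tmul, gather_unitMap, TensorProduct.smul_tmul']

lemma contract_lTensor_piMap {N : Type*} [AddCommMonoid N] [Module R N] (f : M →ₗ[R] N)
    (x : (∀ i, S i) ⊗[R] (∀ i, S i ⊗[R] M)) :
    contract R S N ((LinearMap.piMap fun i => f.lTensor (S i)).lTensor (∀ i, S i) x) =
      f.lTensor (∀ i, S i) (contract R S M x) := by
  have : contract R S N ∘ₗ (LinearMap.piMap fun i => f.lTensor (S i)).lTensor (∀ i, S i) =
      f.lTensor (∀ i, S i) ∘ₗ contract R S M := by
    ext s i t m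
    simp [contract_tmul, gather_single, LinearMap.piMap_single, TensorProduct.smul_tmul']
  exact congr($this x)

lemma sum_lTensor_single_mk_one (y : (∀ i, S i) ⊗[R] M) :
    ∑ b, (LinearMap.single R (fun i => S i ⊗[R] M) b).lTensor (∀ i, S i)
        ((TensorProduct.mk R (S b) M 1).lTensor (∀ i, S i) y) =
      (unitMap R S M).lTensor (∀ i, S i) y := by
  induction y with
  | zero => simp
  | add x y hx hy => simp [Finset.sum_add_distrib, hx, hy]
  | tmul s m =>
    simp only [LinearMap.lTensor_tmul, ← TensorProduct.tmul_sum]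
    congr 1
    ext i
    simp [unitMap, Finset.sum_apply]

lemma homotopy₁_lTensor_coface₀ (x : (∀ i, S i) ⊗[R] (∀ i, S i ⊗[R] M)) :
    homotopy₁ R S M ((coface₀ R S M).lTensor (∀ i, S i) x) = x := by
  induction x with
  | zero => simp
  | add x y hx hy => simp [hx, hy]
  | tmul s v =>
    have slice (b : ι) : contract R S (S b ⊗[R] M)
        (s ⊗ₜ (LinearMap.pi (R := R) fun a => LinearMap.proj (a, b)) (coface₀ R S M v)) =
        s ⊗ₜ v b :=
      contract_lTensor_unitMap (s ⊗ₜ v b)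
    simp only [homotopy₁, LinearMap.comp_apply, LinearMap.sum_apply, LinearMap.lTensor_tmul, slice,
      LinearMap.single_apply]
    rw [← TensorProduct.tmul_sum, Finset.univ_sum_single]

lemma homotopy₁_lTensor_coface₁ (x : (∀ i, S i) ⊗[R] (∀ i, S i ⊗[R] M)) :
    homotopy₁ R S M ((coface₁ R S M).lTensor (∀ i, S i) x) =
      (unitMap R S M).lTensor (∀ i, S i) (contract R S M x) := by
  have slice (b : ι) : contract R S (S b ⊗[R] M)
      ((LinearMap.pi (R := R) fun a => LinearMap.proj (a, b)).lTensor _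
        ((coface₁ R S M).lTensor (∀ i, S i) x)) =
      (TensorProduct.mk R (S b) M 1).lTensor (∀ i, S i) (contract R S M x) := by
    rw [← contract_lTensor_piMap, ← LinearMap.lTensor_comp_apply]
    rfl
  simp only [homotopy₁, LinearMap.comp_apply, LinearMap.sum_apply, slice, sum_lTensor_single_mk_one]

end Contraction

lemma exact_lTensor_unitMap {R : Type*} [CommSemiring R] {ι : Type*} [Fintype ι] [DecidableEq ι]
    {S : ι → Type*} [∀ i, Ring (S i)] [∀ i, Algebra R (S i)]
    {M : Type*} [AddCommGroup M] [Module R M] :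
    Function.Exact ((unitMap R S M).lTensor (∀ i, S i))
      ((coface₀ R S M - coface₁ R S M).lTensor (∀ i, S i)) := by
  refine LinearMap.exact_of_homotopy (fun x => ?_) (contract R S M) (homotopy₁ R S M) fun y => ?_
  · have : (coface₀ R S M - coface₁ R S M) ∘ₗ unitMap R S M = 0 :=
      LinearMap.ext fun m => sub_eq_zero.mpr (coface₀_unitMap_eq_coface₁_unitMap (S := S) m)
    rw [← LinearMap.lTensor_comp_apply, this, LinearMap.lTensor_zero, LinearMap.zero_apply]
  · rw [LinearMap.lTensor_sub, LinearMap.sub_apply, map_sub, homotopy₁_lTensor_coface₀,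
      homotopy₁_lTensor_coface₁, sub_add_cancel]

section FaithfullyFlat

variable {R : Type*} [CommRing R] {ι : Type*} [Fintype ι] [DecidableEq ι]
  {S : ι → Type*} [∀ i, Ring (S i)] [∀ i, Algebra R (S i)]
  {M : Type*} [AddCommGroup M] [Module R M] [Module.FaithfullyFlat R (∀ i, S i)]

theorem exact_unitMap : Function.Exact (unitMap R S M) (coface₀ R S M - coface₁ R S M) :=
  Module.FaithfullyFlat.lTensor_reflects_exact R (∀ i, S i) _ _ exact_lTensor_unitMap

theorem unitMap_injective : Function.Injective (unitMap R S M) :=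
  (Module.FaithfullyFlat.lTensor_injective_iff_injective R (∀ i, S i) _).mp
    (Function.LeftInverse.injective contract_lTensor_unitMap)

end FaithfullyFlat

end Amitsur

theorem finite_flat_cover_descent_equalizer_general
    (R M : Type u) [CommRing R] [AddCommGroup M] [Module R M]
    (ι : Type u) [Fintype ι] (S : ι → Type u)
    [∀ i, CommRing (S i)] [∀ i, Algebra R (S i)]
    [Module.FaithfullyFlat R (∀ i, S i)] :
    Function.Injective (fun (m : M) => fun i => (1 : S i) ⊗ₜ[R] m) ∧
    ∀ v : ∀ i, S i ⊗[R] M,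
      (fun (p : ι × ι) => (TensorProduct.mk R (S p.1) (S p.2 ⊗[R] M) 1) (v p.2)) =
        (fun (p : ι × ι) =>
          (LinearMap.lTensor (S p.1) (TensorProduct.mk R (S p.2) M 1)) (v p.1)) ↔
      v ∈ Set.range (fun (m : M) => fun i => (1 : S i) ⊗ₜ[R] m) := by
  classical
  exact ⟨Amitsur.unitMap_injective, fun v => sub_eq_zero.symm.trans (Amitsur.exact_unitMap v)⟩

theorem finite_flat_cover_descent_equalizer
    (R M : Type u) [CommRing R] [AddCommGroup M] [Module R M]
    (ι : Type u) [Fintype ι] (S : ι → Type u)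
    [∀ i, CommRing (S i)] [∀ i, Algebra R (S i)]
    [∀ i, Module.Flat R (S i)]
    [Module.FaithfullyFlat R (∀ i, S i)] :
    Function.Injective (fun (m : M) => fun i => (1 : S i) ⊗ₜ[R] m) ∧
    ∀ v : ∀ i, S i ⊗[R] M,
      (fun (p : ι × ι) => (TensorProduct.mk R (S p.1) (S p.2 ⊗[R] M) 1) (v p.2)) =
        (fun (p : ι × ι) =>
          (LinearMap.lTensor (S p.1) (TensorProduct.mk R (S p.2) M 1)) (v p.1)) ↔
      v ∈ Set.range (fun (m : M) => fun i => (1 : S i) ⊗ₜ[R] m) :=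
  finite_flat_cover_descent_equalizer_general R M ι S
end

section
/- Suppose E : A → B ⇉ C is an equalizer diagram of R-modules, and {S_i} is a set of flat commutative R-algebras such that S_i ⊗_R E is a pure equalizer diagram for every i, and S = ⊕_i S_i is faithfully flat over R. Then E is pure, i.e., T ⊗_R E is an equalizer diagram for every commutative R-algebra T. -/
/-!
An equalizer `A → B ⇉ C` is the same as an injection `f` that is exact against `g - h`, so it
suffices to reflect injectivity and exactness from the `S i` to `T`. Tensor products commute with
direct sums, and `S i ⊗ (T ⊗ -) ≅ T ⊗ (S i ⊗ -)`, so `(⨁ i, S i) ⊗ (T ⊗ E) ≅ ⨁ i, T ⊗ (S i ⊗ E)`,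
which is exact componentwise by hypothesis; faithful flatness of `⨁ i, S i` reflects this back
to `T ⊗ E`.
-/

universe u

open TensorProduct DirectSum

/-- `A --f--> B ⇉(g,h) C` is an equalizer diagram: `f` is injective and its range is exactly
the set where `g` and `h` agree. -/
def IsEqualizerDiagram {R A B C : Type u} [CommRing R]
    [AddCommGroup A] [AddCommGroup B] [AddCommGroup C]
    [Module R A] [Module R B] [Module R C]
    (f : A →ₗ[R] B) (g h : B →ₗ[R] C) : Prop :=
  Function.Injective f ∧ ∀ b : B, g b = h b ↔ b ∈ Set.range f

lemma isEqualizerDiagram_iff_injective_and_exact {R A B C : Type u} [CommRing R]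
    [AddCommGroup A] [AddCommGroup B] [AddCommGroup C]
    [Module R A] [Module R B] [Module R C]
    (f : A →ₗ[R] B) (g h : B →ₗ[R] C) :
    IsEqualizerDiagram f g h ↔ Function.Injective f ∧ Function.Exact f (g - h) := by
  simp only [IsEqualizerDiagram, Function.Exact, LinearMap.sub_apply, sub_eq_zero]

namespace DirectSum

variable {R ι : Type*} [CommRing R] {M N P : ι → Type*}
  [∀ i, AddCommGroup (M i)] [∀ i, AddCommGroup (N i)] [∀ i, AddCommGroup (P i)]
  [∀ i, Module R (M i)] [∀ i, Module R (N i)] [∀ i, Module R (P i)]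

lemma lmap_exact {F : ∀ i, M i →ₗ[R] N i} {G : ∀ i, N i →ₗ[R] P i}
    (hFG : ∀ i, Function.Exact (F i) (G i)) : Function.Exact (lmap F) (lmap G) := by
  rw [LinearMap.exact_iff, ker_lmap, range_lmap]
  simp only [fun i => (hFG i).linearMap_ker_eq]

end DirectSum

namespace TensorProduct

variable {R : Type*} [CommRing R] {M N X Y Z : Type*}
  [AddCommGroup M] [AddCommGroup N] [AddCommGroup X] [AddCommGroup Y] [AddCommGroup Z]
  [Module R M] [Module R N] [Module R X] [Module R Y] [Module R Z]

lemma leftComm_comp_lTensor_lTensor (f : X →ₗ[R] Y) :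
    (leftComm R M N Y).toLinearMap ∘ₗ (f.lTensor N).lTensor M =
      (f.lTensor M).lTensor N ∘ₗ leftComm R M N X := by
  ext; rfl

lemma exact_lTensor_lTensor_comm (f : X →ₗ[R] Y) (g : Y →ₗ[R] Z) :
    Function.Exact ((f.lTensor N).lTensor M) ((g.lTensor N).lTensor M) ↔
      Function.Exact ((f.lTensor M).lTensor N) ((g.lTensor M).lTensor N) :=
  Function.Exact.iff_of_ladder_linearEquiv (leftComm_comp_lTensor_lTensor f).symm
    (leftComm_comp_lTensor_lTensor g).symm

variable {ι : Type*} [DecidableEq ι] {M : ι → Type*} [∀ i, AddCommGroup (M i)]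
  [∀ i, Module R (M i)]

lemma directSumLeft_comp_lTensor (f : X →ₗ[R] Y) :
    (directSumLeft R R M Y).toLinearMap ∘ₗ f.lTensor (⨁ i, M i) =
      lmap (fun i => f.lTensor (M i)) ∘ₗ directSumLeft R R M X := by
  ext; simp

end TensorProduct

section FaithfullyFlat

variable {R : Type*} [CommRing R] {ι : Type*} {M : ι → Type*} [∀ i, AddCommGroup (M i)]
  [∀ i, Module R (M i)] [Module.FaithfullyFlat R (⨁ i, M i)]
  {N X Y Z : Type*} [AddCommGroup N] [AddCommGroup X] [AddCommGroup Y] [AddCommGroup Z]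
  [Module R N] [Module R X] [Module R Y] [Module R Z]

lemma exact_lTensor_of_forall_exact_lTensor_lTensor {f : X →ₗ[R] Y} {g : Y →ₗ[R] Z}
    (h : ∀ i, Function.Exact ((f.lTensor (M i)).lTensor N) ((g.lTensor (M i)).lTensor N)) :
    Function.Exact (f.lTensor N) (g.lTensor N) := by
  classical
  refine Module.FaithfullyFlat.lTensor_reflects_exact R (⨁ i, M i) _ _ ?_
  refine (Function.Exact.iff_of_ladder_linearEquiv (directSumLeft_comp_lTensor _).symm
    (directSumLeft_comp_lTensor _).symm).1 ?_
  exact DirectSum.lmap_exact fun i => (exact_lTensor_lTensor_comm _ _).2 (h i)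

lemma injective_lTensor_of_forall_injective_lTensor_lTensor {f : X →ₗ[R] Y}
    (h : ∀ i, Function.Injective ((f.lTensor (M i)).lTensor N)) :
    Function.Injective (f.lTensor N) := by
  have h0 := exact_lTensor_of_forall_exact_lTensor_lTensor (M := M) (N := N)
    (f := (0 : PUnit →ₗ[R] X)) (g := f) fun i => by
      simpa only [LinearMap.lTensor_zero, LinearMap.exact_zero_iff_injective] using h i
  rwa [LinearMap.lTensor_zero, LinearMap.exact_zero_iff_injective] at h0

end FaithfullyFlat

theorem pure_equalizer_of_faithfully_flat_locally_pure_general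
    (R : Type u) [CommRing R]
    {A B C : Type u} [AddCommGroup A] [AddCommGroup B] [AddCommGroup C]
    [Module R A] [Module R B] [Module R C]
    (f : A →ₗ[R] B) (g h : B →ₗ[R] C)
    (ι : Type u) (S : ι → Type u)
    [∀ i, CommRing (S i)] [∀ i, Algebra R (S i)]
    (hpure : ∀ i, ∀ (T : Type u) [CommRing T] [Algebra R T],
      IsEqualizerDiagram
        (LinearMap.lTensor T (LinearMap.lTensor (S i) f))
        (LinearMap.lTensor T (LinearMap.lTensor (S i) g))
        (LinearMap.lTensor T (LinearMap.lTensor (S i) h)))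
    [Module.FaithfullyFlat R (⨁ i, S i)] :
    ∀ (T : Type u) [CommRing T] [Algebra R T],
      IsEqualizerDiagram
        (LinearMap.lTensor T f) (LinearMap.lTensor T g) (LinearMap.lTensor T h) := by
  intro T _ _
  have hS (i : ι) := (isEqualizerDiagram_iff_injective_and_exact _ _ _).1 (hpure i T)
  simp only [← LinearMap.lTensor_sub] at hS
  rw [isEqualizerDiagram_iff_injective_and_exact, ← LinearMap.lTensor_sub]
  exact ⟨injective_lTensor_of_forall_injective_lTensor_lTensor fun i => (hS i).1,
    exact_lTensor_of_forall_exact_lTensor_lTensor fun i => (hS i).2⟩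

theorem pure_equalizer_of_faithfully_flat_locally_pure
    (R : Type u) [CommRing R]
    {A B C : Type u} [AddCommGroup A] [AddCommGroup B] [AddCommGroup C]
    [Module R A] [Module R B] [Module R C]
    (f : A →ₗ[R] B) (g h : B →ₗ[R] C)
    (hE : IsEqualizerDiagram f g h)
    (ι : Type u) (S : ι → Type u)
    [∀ i, CommRing (S i)] [∀ i, Algebra R (S i)] [∀ i, Module.Flat R (S i)]
    (hpure : ∀ i, ∀ (T : Type u) [CommRing T] [Algebra R T],
      IsEqualizerDiagram
        (LinearMap.lTensor T (LinearMap.lTensor (S i) f))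
        (LinearMap.lTensor T (LinearMap.lTensor (S i) g))
        (LinearMap.lTensor T (LinearMap.lTensor (S i) h)))
    [Module.FaithfullyFlat R (⨁ i, S i)] :
    ∀ (T : Type u) [CommRing T] [Algebra R T],
      IsEqualizerDiagram
        (LinearMap.lTensor T f) (LinearMap.lTensor T g) (LinearMap.lTensor T h) :=
  pure_equalizer_of_faithfully_flat_locally_pure_general R f g h ι S hpure
end

section
/- For a commutative ring A, the category of quasi-coherent sheaves over the functor Spec A : Rings → Set (defined by (Spec A)(R) = Hom_Rings(A, R)) is equivalent to the category of A-modules. The equivalence takes an A-module M to the assignment (R, x) ↦ R ⊗_A M (with R an A-algebra via x), and its inverse evaluates a quasi-coherent sheaf at the identity point (A, id_A). -/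
/-!
By quasi-coherence along the map of points `x : (A, id) → (R, x)`, every value `N(x)` of a
quasi-coherent sheaf is identified with `R ⊗[A] N(id)`, and this identification is natural in
`N` and compatible with the restriction maps. Hence a morphism of sheaves is determined by its
component at the identity point, and every `A`-linear map between identity components extends
by base change to a morphism: evaluation is fully faithful. It is essentially surjective because
`(R, x) ↦ R ⊗[A] M` is quasi-coherent, by the cancellation `S ⊗[R] (R ⊗[A] M) ≃ S ⊗[A] M`,
and its value at the identity point is `A ⊗[A] M ≃ M`.
-/

set_option maxHeartbeats 1000000

universe u

open TensorProduct CategoryTheory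

/-- The base change `S ⊗[R] P` of an `R`-module `P` along a ring map `f : R → S`. -/
def Tens {R S : Type u} [CommRing R] [CommRing S] (f : R →+* S) (P : Type u)
    [AddCommGroup P] [Module R P] : Type u :=
  letI := f.toAlgebra
  S ⊗[R] P

/-- The adjoint `S ⊗[R] P → Q` of an `f`-semilinear map `t : P → Q`, `s ⊗ p ↦ s • t p`. -/
noncomputable def adjMap {R S : Type u} [CommRing R] [CommRing S] (f : R →+* S)
    {P Q : Type u} [AddCommGroup P] [Module R P] [AddCommGroup Q] [Module S Q]
    (t : P → Q) (h_add : ∀ m m', t (m + m') = t m + t m')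
    (h_smul : ∀ (r : R) (m : P), t (r • m) = f r • t m) :
    Tens f P → Q := by
  letI := f.toAlgebra
  letI : Module R Q := Module.compHom Q f
  refine fun z => TensorProduct.lift (LinearMap.mk₂ R (fun s p => s • t p)
    ?_ ?_ ?_ ?_) z
  · intro s s' p
    show (s + s') • t p = s • t p + s' • t p
    rw [add_smul]
  · intro r s p
    show (r • s) • t p = f r • (s • t p)
    rw [Algebra.smul_def, mul_smul]
    rfl
  · intro s p p'
    show s • t (p + p') = s • t p + s • t p'
    rw [h_add, smul_add]
  · intro c s p
    show s • t (c • p) = f c • (s • t p)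
    rw [h_smul, smul_comm]

/-- A quasi-coherent sheaf over the functor `Spec A : Rings → Set`,
`(Spec A)(R) = Hom(A, R)`: an `R`-module `M x` for every point `(R, x : A →+* R)`, with
functorial restriction maps `θ` along maps of points whose adjoints `S ⊗[R] M x → M y` are
isomorphisms. -/
structure QCSpec (A : Type u) [CommRing A] : Type (u + 2) where
  M : ∀ {R : Type u} [CommRing R], (A →+* R) → ModuleCat.{u} R
  θ : ∀ {R S : Type u} [CommRing R] [CommRing S] (f : R →+* S) (x : A →+* R) (y : A →+* S),
    f.comp x = y → M x → M y
  θ_add : ∀ {R S : Type u} [CommRing R] [CommRing S] (f : R →+* S) (x : A →+* R)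
    (y : A →+* S) (h : f.comp x = y) (m m' : M x),
    θ f x y h (m + m') = θ f x y h m + θ f x y h m'
  θ_smul : ∀ {R S : Type u} [CommRing R] [CommRing S] (f : R →+* S) (x : A →+* R)
    (y : A →+* S) (h : f.comp x = y) (r : R) (m : M x),
    θ f x y h (r • m) = f r • θ f x y h m
  θ_id : ∀ {R : Type u} [CommRing R] (x : A →+* R) (h : (RingHom.id R).comp x = x)
    (m : M x), θ (RingHom.id R) x x h m = m
  θ_comp : ∀ {R S T : Type u} [CommRing R] [CommRing S] [CommRing T] (f : R →+* S)
    (g : S →+* T) (x : A →+* R) (y : A →+* S) (z : A →+* T) (h1 : f.comp x = y)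
    (h2 : g.comp y = z) (h3 : (g.comp f).comp x = z) (m : M x),
    θ g y z h2 (θ f x y h1 m) = θ (g.comp f) x z h3 m
  qc : ∀ {R S : Type u} [CommRing R] [CommRing S] (f : R →+* S) (x : A →+* R) (y : A →+* S)
    (h : f.comp x = y),
    Function.Bijective (adjMap f (θ f x y h) (θ_add f x y h) (θ_smul f x y h))

/-- A morphism of quasi-coherent sheaves over `Spec A`. -/
structure QCSpecHom {A : Type u} [CommRing A] (M N : QCSpec A) : Type (u + 1) where
  app : ∀ {R : Type u} [CommRing R] (x : A →+* R), M.M x → N.M x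
  app_add : ∀ {R : Type u} [CommRing R] (x : A →+* R) (m m' : M.M x),
    app x (m + m') = app x m + app x m'
  app_smul : ∀ {R : Type u} [CommRing R] (x : A →+* R) (r : R) (m : M.M x),
    app x (r • m) = r • app x m
  app_θ : ∀ {R S : Type u} [CommRing R] [CommRing S] (f : R →+* S) (x : A →+* R)
    (y : A →+* S) (h : f.comp x = y) (m : M.M x),
    app y (M.θ f x y h m) = N.θ f x y h (app x m)

instance qcSpecCategory (A : Type u) [CommRing A] : Category (QCSpec A) where
  Hom M N := QCSpecHom M N
  id M := { app := fun _ m => m, app_add := fun _ _ _ => rfl,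
            app_smul := fun _ _ _ => rfl, app_θ := fun _ _ _ _ _ => rfl }
  comp τ σ := { app := fun x m => σ.app x (τ.app x m),
                app_add := by intros; rw [τ.app_add, σ.app_add],
                app_smul := by intros; rw [τ.app_smul, σ.app_smul],
                app_θ := by intros; rw [τ.app_θ, σ.app_θ] }

/-- The evaluation functor from quasi-coherent sheaves over `Spec A` to `A`-modules, taking a
quasi-coherent sheaf to its value at the identity point `(A, id_A)`. -/
def evalAtIdentity (A : Type u) [CommRing A] : QCSpec A ⥤ ModuleCat.{u} A where
  obj N := N.M (RingHom.id A)
  map τ := ModuleCat.ofHom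
    { toFun := τ.app (RingHom.id A)
      map_add' := τ.app_add (RingHom.id A)
      map_smul' := τ.app_smul (RingHom.id A) }

noncomputable instance instAddCommGroupTens {R S : Type u} [CommRing R] [CommRing S]
    (f : R →+* S) (P : Type u) [AddCommGroup P] [Module R P] : AddCommGroup (Tens f P) :=
  inferInstanceAs (AddCommGroup (letI := f.toAlgebra; S ⊗[R] P))

noncomputable instance instModuleTens {R S : Type u} [CommRing R] [CommRing S]
    (f : R →+* S) (P : Type u) [AddCommGroup P] [Module R P] : Module S (Tens f P) :=
  inferInstanceAs (Module S (letI := f.toAlgebra; S ⊗[R] P))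

section AdjLinearMap

variable {R S : Type u} [CommRing R] [CommRing S] (f : R →+* S)
    {P Q : Type u} [AddCommGroup P] [Module R P] [AddCommGroup Q] [Module S Q]
    (t : P → Q) (h_add : ∀ m m', t (m + m') = t m + t m')
    (h_smul : ∀ (r : R) (m : P), t (r • m) = f r • t m)

/-- `adjMap`, bundled as an `S`-linear map whose underlying function is `adjMap` definitionally,
so that the bijectivity in `QCSpec.qc` applies to it as it stands. -/
noncomputable def adjLinearMap : Tens f P →ₗ[S] Q :=
  letI := f.toAlgebra
  letI : Module R Q := Module.compHom Q f
  haveI : IsScalarTower R S Q := ⟨fun r s q => mul_smul (f r) s q⟩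
  AlgebraTensorModule.lift <| LinearMap.mk₂' S R (fun s p => s • t p)
    (fun _ _ _ => add_smul _ _ _) (fun _ _ _ => mul_smul _ _ _)
    (fun s p p' => by rw [h_add, smul_add]) (fun r s p => by rw [h_smul, smul_comm]; rfl)

theorem adjLinearMap_tmul (s : S) (p : P) :
    letI := f.toAlgebra
    adjLinearMap f t h_add h_smul (s ⊗ₜ[R] p) = s • t p := rfl

end AdjLinearMap

namespace Tens

variable {A R S T : Type u} [CommRing A] [CommRing R] [CommRing S] [CommRing T]
  (Q : Type u) [AddCommGroup Q] [Module A Q]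

/-- `TensorProduct.induction_on` with the zero and addition of `Tens`, so that the resulting goals
can be rewritten with `map_zero` and `map_add` of maps defined on `Tens`. -/
@[elab_as_elim]
theorem induction_on {x : A →+* R} {motive : Tens x Q → Prop} (z : Tens x Q) (zero : motive 0)
    (tmul : ∀ (r : R) (q : Q), motive (letI := x.toAlgebra; r ⊗ₜ[A] q))
    (add : ∀ z z', motive z → motive z' → motive (z + z')) : motive z :=
  letI := x.toAlgebra
  TensorProduct.induction_on z zero tmul add

noncomputable def rTensor {x : A →+* R} {y : A →+* S} (f : R →+* S) (h : f.comp x = y) :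
    Tens x Q →ₛₗ[f] Tens y Q :=
  letI := x.toAlgebra
  letI := y.toAlgebra
  let φ : R →ₗ[A] S :=
    { toFun := f
      map_add' := f.map_add
      map_smul' := fun a r => by subst h; exact f.map_mul (x a) r }
  { toFun := LinearMap.rTensor Q φ
    map_add' := map_add _
    map_smul' := fun r z => by
      suffices ∀ w : R ⊗[A] Q, LinearMap.rTensor Q φ (r • w) = f r • LinearMap.rTensor Q φ w from
        this z
      intro w
      induction w using TensorProduct.induction_on with
      | zero => simp only [smul_zero, map_zero]
      | tmul r' q =>
        simp only [smul_tmul', smul_eq_mul, LinearMap.rTensor_tmul, LinearMap.coe_mk,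
          AddHom.coe_mk, map_mul, φ]
      | add w w' hw hw' => simp only [smul_add, map_add, hw, hw'] }

theorem rTensor_tmul {x : A →+* R} {y : A →+* S} (f : R →+* S) (h : f.comp x = y) (r : R)
    (q : Q) :
    letI := x.toAlgebra
    letI := y.toAlgebra
    rTensor Q f h (r ⊗ₜ[A] q) = f r ⊗ₜ[A] q := rfl

theorem rTensor_id {x : A →+* R} (h : (RingHom.id R).comp x = x) (z : Tens x Q) :
    rTensor Q (RingHom.id R) h z = z := by
  induction z using Tens.induction_on with
  | zero => exact map_zero _
  | tmul r q => rfl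
  | add z z' hz hz' => rw [map_add, hz, hz']

theorem rTensor_rTensor {x : A →+* R} {y : A →+* S} {z : A →+* T} (f : R →+* S) (g : S →+* T)
    (h₁ : f.comp x = y) (h₂ : g.comp y = z) (h₃ : (g.comp f).comp x = z) (w : Tens x Q) :
    rTensor Q g h₂ (rTensor Q f h₁ w) = rTensor Q (g.comp f) h₃ w := by
  induction w using Tens.induction_on with
  | zero => simp only [map_zero]
  | tmul r q => rfl
  | add w w' hw hw' => rw [map_add, map_add, map_add, hw, hw']

variable {Q} in
noncomputable def baseChange (x : A →+* R) {P : Type u} [AddCommGroup P] [Module A P]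
    (g : Q →ₗ[A] P) : Tens x Q →ₗ[R] Tens x P :=
  letI := x.toAlgebra
  LinearMap.baseChange R g

variable {Q} in
theorem baseChange_tmul (x : A →+* R) {P : Type u} [AddCommGroup P] [Module A P]
    (g : Q →ₗ[A] P) (r : R) (q : Q) :
    letI := x.toAlgebra
    baseChange x g (r ⊗ₜ[A] q) = r ⊗ₜ[A] g q := rfl

variable {Q} in
theorem rTensor_baseChange {x : A →+* R} {y : A →+* S} (f : R →+* S) (h : f.comp x = y)
    {P : Type u} [AddCommGroup P] [Module A P] (g : Q →ₗ[A] P) (z : Tens x Q) :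
    rTensor P f h (baseChange x g z) = baseChange y g (rTensor Q f h z) := by
  induction z using Tens.induction_on with
  | zero => simp only [map_zero]
  | tmul r q => rfl
  | add z z' hz hz' => rw [map_add, map_add, map_add, map_add, hz, hz']

theorem adjLinearMap_rTensor_bijective {x : A →+* R} {y : A →+* S} (f : R →+* S)
    (h : f.comp x = y) :
    Function.Bijective (adjLinearMap f (rTensor Q f h) (map_add _) (map_smulₛₗ _)) := by
  let := x.toAlgebra
  let := y.toAlgebra
  let := f.toAlgebra
  have : IsScalarTower A R S :=
    IsScalarTower.of_algebraMap_eq fun a => (RingHom.congr_fun h a).symm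
  suffices ∀ w, adjLinearMap f (rTensor Q f h) (map_add _) (map_smulₛₗ _) w =
      AlgebraTensorModule.cancelBaseChange A R S S Q w from
    funext this ▸ (AlgebraTensorModule.cancelBaseChange A R S S Q).bijective
  intro w
  induction w using Tens.induction_on with
  | zero => exact (map_zero _).trans (map_zero _).symm
  | tmul s t =>
    rw [adjLinearMap_tmul]
    induction t using Tens.induction_on with
    | zero => simp only [map_zero, smul_zero, tmul_zero]; exact (map_zero _).symm
    | tmul r q =>
      show (s * f r) ⊗ₜ[A] q = (f r * s) ⊗ₜ[A] q
      rw [mul_comm]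
    | add t t' ht ht' =>
      simp only [map_add, smul_add, tmul_add, ht, ht']; exact (map_add _ _ _).symm
  | add w w' hw hw' => rw [map_add, hw, hw']; exact (map_add _ w w').symm

end Tens

namespace QCSpec

variable {A : Type u} [CommRing A] (N : QCSpec A)

theorem θ_zero {R S : Type u} [CommRing R] [CommRing S] (f : R →+* S) (x : A →+* R)
    (y : A →+* S) (h : f.comp x = y) : N.θ f x y h 0 = 0 := by
  simpa using N.θ_add f x y h 0 0

noncomputable def comparison {R : Type u} [CommRing R] (x : A →+* R) :
    Tens x (N.M (RingHom.id A)) ≃ₗ[R] N.M x :=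
  LinearEquiv.ofBijective
    (adjLinearMap x (N.θ x (RingHom.id A) x (RingHom.comp_id x)) (N.θ_add _ _ _ _)
      (N.θ_smul _ _ _ _))
    (N.qc x (RingHom.id A) x (RingHom.comp_id x))

theorem comparison_tmul {R : Type u} [CommRing R] (x : A →+* R) (r : R)
    (m : N.M (RingHom.id A)) :
    letI := x.toAlgebra
    N.comparison x (r ⊗ₜ[A] m) = r • N.θ x (RingHom.id A) x (RingHom.comp_id x) m := rfl

theorem comparison_symm_id (m : N.M (RingHom.id A)) :
    letI := (RingHom.id A).toAlgebra
    (N.comparison (RingHom.id A)).symm m = (1 : A) ⊗ₜ[A] m := by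
  refine (N.comparison _).symm_apply_eq.mpr ?_
  rw [comparison_tmul, N.θ_id, one_smul]

theorem θ_comparison {R S : Type u} [CommRing R] [CommRing S] (f : R →+* S) (x : A →+* R)
    (y : A →+* S) (h : f.comp x = y) (t : Tens x (N.M (RingHom.id A))) :
    N.θ f x y h (N.comparison x t) = N.comparison y (Tens.rTensor _ f h t) := by
  induction t using Tens.induction_on with
  | zero => simp only [map_zero, θ_zero]
  | tmul r m =>
    rw [comparison_tmul, N.θ_smul, Tens.rTensor_tmul, comparison_tmul,
      N.θ_comp x f (RingHom.id A) x y (RingHom.comp_id x) h (by rw [RingHom.comp_id, h])]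
    subst h
    rfl
  | add t t' ht ht' => rw [map_add, N.θ_add, ht, ht', map_add, map_add]

theorem comparison_symm_θ {R S : Type u} [CommRing R] [CommRing S] (f : R →+* S)
    (x : A →+* R) (y : A →+* S) (h : f.comp x = y) (m : N.M x) :
    (N.comparison y).symm (N.θ f x y h m) = Tens.rTensor _ f h ((N.comparison x).symm m) := by
  rw [LinearEquiv.symm_apply_eq, ← θ_comparison, LinearEquiv.apply_symm_apply]

end QCSpec

namespace QCSpecHom

variable {A : Type u} [CommRing A] {N P : QCSpec A}

theorem ext {τ σ : QCSpecHom N P}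
    (h : ∀ {R : Type u} [CommRing R] (x : A →+* R) (m : N.M x), τ.app x m = σ.app x m) :
    τ = σ := by
  obtain ⟨app, _, _, _⟩ := τ
  obtain ⟨app', _, _, _⟩ := σ
  congr
  funext R _ x m
  exact h x m

def appLinearMap (τ : QCSpecHom N P) {R : Type u} [CommRing R] (x : A →+* R) :
    N.M x →ₗ[R] P.M x where
  toFun := τ.app x
  map_add' := τ.app_add x
  map_smul' := τ.app_smul x

theorem app_comparison (τ : QCSpecHom N P) {R : Type u} [CommRing R] (x : A →+* R)
    (t : Tens x (N.M (RingHom.id A))) :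
    τ.app x (N.comparison x t) =
      P.comparison x (Tens.baseChange x (τ.appLinearMap (RingHom.id A)) t) := by
  induction t using Tens.induction_on with
  | zero => simp only [map_zero]; exact (τ.appLinearMap x).map_zero
  | tmul r m => rw [QCSpec.comparison_tmul, τ.app_smul, τ.app_θ, Tens.baseChange_tmul,
      QCSpec.comparison_tmul]; rfl
  | add t t' ht ht' => rw [map_add, τ.app_add, ht, ht', map_add, map_add]

noncomputable def ofLinearMap (g : N.M (RingHom.id A) →ₗ[A] P.M (RingHom.id A)) :
    QCSpecHom N P where
  app x m := P.comparison x (Tens.baseChange x g ((N.comparison x).symm m))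
  app_add x m m' := by simp only [map_add]
  app_smul x r m := by simp only [map_smul]
  app_θ f x y h m := by
    rw [QCSpec.comparison_symm_θ, ← Tens.rTensor_baseChange, QCSpec.θ_comparison]

theorem ofLinearMap_app_id (g : N.M (RingHom.id A) →ₗ[A] P.M (RingHom.id A))
    (m : N.M (RingHom.id A)) : (ofLinearMap g).app (RingHom.id A) m = g m := by
  simp only [ofLinearMap]
  rw [QCSpec.comparison_symm_id, Tens.baseChange_tmul, QCSpec.comparison_tmul, P.θ_id, one_smul]

theorem eq_ofLinearMap (τ : QCSpecHom N P) : τ = ofLinearMap (τ.appLinearMap (RingHom.id A)) :=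
  ext fun x m => by
    rw [← (N.comparison x).apply_symm_apply m, app_comparison]
    simp only [ofLinearMap, LinearEquiv.symm_apply_apply]

end QCSpecHom

namespace QCSpec

variable {A : Type u} [CommRing A]

noncomputable def ofModule (M : Type u) [AddCommGroup M] [Module A M] : QCSpec A where
  M x := ModuleCat.of _ (Tens x M)
  θ f _ _ h := Tens.rTensor M f h
  θ_add _ _ _ _ := map_add _
  θ_smul _ _ _ _ := map_smulₛₗ _
  θ_id _ h := Tens.rTensor_id M h
  θ_comp f g _ _ _ h₁ h₂ h₃ := Tens.rTensor_rTensor M f g h₁ h₂ h₃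
  qc f _ _ h := Tens.adjLinearMap_rTensor_bijective M f h

end QCSpec

section evalAtIdentity

variable (A : Type u) [CommRing A]

theorem evalAtIdentity_faithful : (evalAtIdentity A).Faithful where
  map_injective {N P} τ σ hτσ := by
    rw [QCSpecHom.eq_ofLinearMap τ, QCSpecHom.eq_ofLinearMap σ]
    exact congrArg QCSpecHom.ofLinearMap (congrArg ModuleCat.Hom.hom hτσ)

theorem evalAtIdentity_full : (evalAtIdentity A).Full where
  map_surjective g :=
    ⟨QCSpecHom.ofLinearMap g.hom,
      ModuleCat.hom_ext (LinearMap.ext (QCSpecHom.ofLinearMap_app_id g.hom))⟩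

theorem evalAtIdentity_essSurj : (evalAtIdentity A).EssSurj where
  mem_essImage M :=
    ⟨QCSpec.ofModule M, ⟨(TensorProduct.lid A M : Tens (RingHom.id A) M ≃ₗ[A] M).toModuleIso⟩⟩

end evalAtIdentity

theorem qcSpec_equivalent_to_modules (A : Type u) [CommRing A] :
    (evalAtIdentity A).IsEquivalence :=
  ⟨evalAtIdentity_faithful A, evalAtIdentity_full A, evalAtIdentity_essSurj A⟩
end

section
/- Let Φ : (X₀, X₁) → (Y₀, Y₁) be a morphism of presheaves of groupoids on a site whose sheaf-theoretic essential image is all of Y₀. Then the induced pullback functor Φ* on categories of sheaves of modules, Φ* : Sh(Y₀, Y₁) → Sh(X₀, X₁), is faithful. -/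
set_option maxHeartbeats 1000000

universe u

open TensorProduct

/-- A presheaf of groupoids on `Aff`, the opposite of the category of commutative rings (of a
fixed universe): a functorial assignment of a (small) groupoid to every commutative ring. -/
structure PGpd : Type (u + 1) where
  Ob : ∀ (R : Type u) [CommRing R], Type u
  Hom : ∀ {R : Type u} [CommRing R], Ob R → Ob R → Type u
  gid : ∀ {R : Type u} [CommRing R] (x : Ob R), Hom x x
  gcomp : ∀ {R : Type u} [CommRing R] {x y z : Ob R}, Hom x y → Hom y z → Hom x z
  ginv : ∀ {R : Type u} [CommRing R] {x y : Ob R}, Hom x y → Hom y x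
  id_gcomp : ∀ {R : Type u} [CommRing R] {x y : Ob R} (α : Hom x y), gcomp (gid x) α = α
  gcomp_id : ∀ {R : Type u} [CommRing R] {x y : Ob R} (α : Hom x y), gcomp α (gid y) = α
  gcomp_assoc : ∀ {R : Type u} [CommRing R] {x y z w : Ob R} (α : Hom x y) (β : Hom y z)
    (γ : Hom z w), gcomp (gcomp α β) γ = gcomp α (gcomp β γ)
  ginv_gcomp : ∀ {R : Type u} [CommRing R] {x y : Ob R} (α : Hom x y),
    gcomp (ginv α) α = gid y
  gcomp_ginv : ∀ {R : Type u} [CommRing R] {x y : Ob R} (α : Hom x y),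
    gcomp α (ginv α) = gid x
  mapOb : ∀ {R S : Type u} [CommRing R] [CommRing S], (R →+* S) → Ob R → Ob S
  mapHom : ∀ {R S : Type u} [CommRing R] [CommRing S] (f : R →+* S) {x y : Ob R},
    Hom x y → Hom (mapOb f x) (mapOb f y)
  mapOb_id : ∀ {R : Type u} [CommRing R] (x : Ob R), mapOb (RingHom.id R) x = x
  mapOb_comp : ∀ {R S T : Type u} [CommRing R] [CommRing S] [CommRing T]
    (f : R →+* S) (g : S →+* T) (x : Ob R), mapOb (g.comp f) x = mapOb g (mapOb f x)
  mapHom_id : ∀ {R : Type u} [CommRing R] {x y : Ob R} (α : Hom x y),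
    HEq (mapHom (RingHom.id R) α) α
  mapHom_comp : ∀ {R S T : Type u} [CommRing R] [CommRing S] [CommRing T]
    (f : R →+* S) (g : S →+* T) {x y : Ob R} (α : Hom x y),
    HEq (mapHom (g.comp f) α) (mapHom g (mapHom f α))
  mapHom_gid : ∀ {R S : Type u} [CommRing R] [CommRing S] (f : R →+* S) (x : Ob R),
    mapHom f (gid x) = gid (mapOb f x)
  mapHom_gcomp : ∀ {R S : Type u} [CommRing R] [CommRing S] (f : R →+* S) {x y z : Ob R}
    (α : Hom x y) (β : Hom y z), mapHom f (gcomp α β) = gcomp (mapHom f α) (mapHom f β)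

/-- A morphism of presheaves of groupoids. -/
structure PGpdHom (X Y : PGpd.{u}) : Type (u + 1) where
  onOb : ∀ {R : Type u} [CommRing R], X.Ob R → Y.Ob R
  onHom : ∀ {R : Type u} [CommRing R] {x y : X.Ob R}, X.Hom x y → Y.Hom (onOb x) (onOb y)
  onOb_map : ∀ {R S : Type u} [CommRing R] [CommRing S] (f : R →+* S) (x : X.Ob R),
    onOb (X.mapOb f x) = Y.mapOb f (onOb x)
  onHom_map : ∀ {R S : Type u} [CommRing R] [CommRing S] (f : R →+* S) {x y : X.Ob R}
    (α : X.Hom x y), HEq (onHom (X.mapHom f α)) (Y.mapHom f (onHom α))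
  onHom_gid : ∀ {R : Type u} [CommRing R] (x : X.Ob R), onHom (X.gid x) = Y.gid (onOb x)
  onHom_gcomp : ∀ {R : Type u} [CommRing R] {x y z : X.Ob R} (α : X.Hom x y) (β : X.Hom y z),
    onHom (X.gcomp α β) = Y.gcomp (onHom α) (onHom β)

/-- A cover of a commutative ring `R`: a family of `R`-algebras, i.e. ring maps out of `R`. -/
structure RingCover (R : Type u) [CommRing R] : Type (u + 1) where
  ι : Type u
  S : ι → CommRingCat.{u}
  f : ∀ i, R →+* S i

variable {R : Type u} [CommRing R]

/-- The "intersection" `S j ⊗[R] S k` of two members of a cover. -/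
def RingCover.pair (c : RingCover R) (j k : c.ι) : Type u :=
  letI := (c.f j).toAlgebra
  letI := (c.f k).toAlgebra
  (c.S j) ⊗[R] (c.S k)

noncomputable instance (c : RingCover R) (j k : c.ι) : CommRing (c.pair j k) :=
  letI := (c.f j).toAlgebra
  letI := (c.f k).toAlgebra
  (inferInstance : CommRing ((c.S j) ⊗[R] (c.S k)))

/-- The map `S j → S j ⊗[R] S k`. -/
noncomputable def RingCover.pleft (c : RingCover R) (j k : c.ι) : c.S j →+* c.pair j k :=
  letI := (c.f j).toAlgebra
  letI := (c.f k).toAlgebra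
  Algebra.TensorProduct.includeLeftRingHom

/-- The map `S k → S j ⊗[R] S k`. -/
noncomputable def RingCover.pright (c : RingCover R) (j k : c.ι) : c.S k →+* c.pair j k :=
  letI := (c.f j).toAlgebra
  letI := (c.f k).toAlgebra
  (Algebra.TensorProduct.includeRight : ↥(c.S k) →ₐ[R] (c.S j) ⊗[R] (c.S k)).toRingHom

/-- The base change of a cover of `R` along a ring map `g : R → T`, with members
`T ⊗[R] S i`. -/
noncomputable def RingCover.push (c : RingCover R) {T : Type u} [CommRing T] (g : R →+* T) :
    RingCover T where
  ι := c.ι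
  S := fun i =>
    letI := (c.f i).toAlgebra
    letI := g.toAlgebra
    CommRingCat.of (T ⊗[R] (c.S i))
  f := fun i =>
    letI := (c.f i).toAlgebra
    letI := g.toAlgebra
    (Algebra.TensorProduct.includeLeftRingHom : T →+* T ⊗[R] (c.S i))

/-- The composite of a cover `{R → S i}` and covers `{S i → T i j}` of each member. -/
def RingCover.bind (c : RingCover R) (d : ∀ i, RingCover (c.S i)) : RingCover R where
  ι := Σ i, (d i).ι
  S := fun p => (d p.1).S p.2
  f := fun p => ((d p.1).f p.2).comp (c.f p.1)

/-- The identity cover of `R`. -/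
def RingCover.idCover (R : Type u) [CommRing R] : RingCover R where
  ι := PUnit
  S := fun _ => CommRingCat.of R
  f := fun _ => RingHom.id R

/-- A Grothendieck topology (in pretopology form) on `Aff`: a collection of covers for each
commutative ring, containing the identity cover and stable under base change and
composition. -/
structure AffTopology : Type (u + 1) where
  covers : ∀ (R : Type u) [CommRing R], Set (RingCover R)
  id_mem : ∀ (R : Type u) [CommRing R], RingCover.idCover R ∈ covers R
  push_mem : ∀ {R T : Type u} [CommRing R] [CommRing T] (g : R →+* T) (c : RingCover R),
    c ∈ covers R → c.push g ∈ covers T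
  bind_mem : ∀ {R : Type u} [CommRing R] (c : RingCover R) (d : ∀ i, RingCover (c.S i)),
    c ∈ covers R → (∀ i, d i ∈ covers (c.S i)) → c.bind d ∈ covers R

/-- A sheaf of modules over a presheaf of groupoids `(X₀, X₁)` on `Aff`, for the topology `T`:
an `R`-module `M x` for every point `(R, x)` of `X₀`, functorial restriction maps `θ`
(indexed, for convenience, by a target point together with a proof that it is the restriction
of the source point), satisfying the sheaf condition for covers in `T`, together with
isomorphisms `ψ α : M x ≃ M y` for the morphisms `α : x → y` of `X₁`, compatible with
restriction and satisfying the cocycle condition. -/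
structure SheafOn (X : PGpd.{u}) (T : AffTopology.{u}) : Type (u + 2) where
  M : ∀ {R : Type u} [CommRing R], X.Ob R → ModuleCat.{u} R
  θ : ∀ {R S : Type u} [CommRing R] [CommRing S] (f : R →+* S) (x : X.Ob R) (y : X.Ob S),
    X.mapOb f x = y → M x → M y
  θ_add : ∀ {R S : Type u} [CommRing R] [CommRing S] (f : R →+* S) (x : X.Ob R) (y : X.Ob S)
    (h : X.mapOb f x = y) (m m' : M x), θ f x y h (m + m') = θ f x y h m + θ f x y h m'
  θ_smul : ∀ {R S : Type u} [CommRing R] [CommRing S] (f : R →+* S) (x : X.Ob R) (y : X.Ob S)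
    (h : X.mapOb f x = y) (r : R) (m : M x), θ f x y h (r • m) = f r • θ f x y h m
  θ_id : ∀ {R : Type u} [CommRing R] (x : X.Ob R) (h : X.mapOb (RingHom.id R) x = x)
    (m : M x), θ (RingHom.id R) x x h m = m
  θ_comp : ∀ {R S T' : Type u} [CommRing R] [CommRing S] [CommRing T'] (f : R →+* S)
    (g : S →+* T') (x : X.Ob R) (y : X.Ob S) (z : X.Ob T') (h1 : X.mapOb f x = y)
    (h2 : X.mapOb g y = z) (h3 : X.mapOb (g.comp f) x = z) (m : M x),
    θ g y z h2 (θ f x y h1 m) = θ (g.comp f) x z h3 m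
  ψ : ∀ {R : Type u} [CommRing R] {x y : X.Ob R}, X.Hom x y → M x → M y
  ψ_add : ∀ {R : Type u} [CommRing R] {x y : X.Ob R} (α : X.Hom x y) (m m' : M x),
    ψ α (m + m') = ψ α m + ψ α m'
  ψ_smul : ∀ {R : Type u} [CommRing R] {x y : X.Ob R} (α : X.Hom x y) (r : R) (m : M x),
    ψ α (r • m) = r • ψ α m
  ψ_gid : ∀ {R : Type u} [CommRing R] (x : X.Ob R) (m : M x), ψ (X.gid x) m = m
  ψ_gcomp : ∀ {R : Type u} [CommRing R] {x y z : X.Ob R} (α : X.Hom x y) (β : X.Hom y z)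
    (m : M x), ψ (X.gcomp α β) m = ψ β (ψ α m)
  ψ_natural : ∀ {R S : Type u} [CommRing R] [CommRing S] (f : R →+* S) {x y : X.Ob R}
    (α : X.Hom x y) (x' y' : X.Ob S) (hx : X.mapOb f x = x') (hy : X.mapOb f y = y')
    (β : X.Hom x' y'), HEq (X.mapHom f α) β →
    ∀ m : M x, θ f y y' hy (ψ α m) = ψ β (θ f x x' hx m)
  sheaf : ∀ {R : Type u} [CommRing R] (c : RingCover R), c ∈ T.covers R → ∀ (x : X.Ob R),
    (∀ m m' : M x,
      (∀ i, θ (c.f i) x (X.mapOb (c.f i) x) rfl m = θ (c.f i) x (X.mapOb (c.f i) x) rfl m') →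
      m = m') ∧
    (∀ v : ∀ i, M (X.mapOb (c.f i) x),
      (∀ (j k : c.ι) (w : X.Ob (c.pair j k))
        (hj : X.mapOb (c.pleft j k) (X.mapOb (c.f j) x) = w)
        (hk : X.mapOb (c.pright j k) (X.mapOb (c.f k) x) = w),
        θ (c.pleft j k) (X.mapOb (c.f j) x) w hj (v j) =
          θ (c.pright j k) (X.mapOb (c.f k) x) w hk (v k)) →
      ∃ m : M x, ∀ i, θ (c.f i) x (X.mapOb (c.f i) x) rfl m = v i)

/-- A morphism of sheaves of modules over a presheaf of groupoids. -/
structure SheafHom {X : PGpd.{u}} {T : AffTopology.{u}} (M N : SheafOn X T) :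
    Type (u + 1) where
  app : ∀ {R : Type u} [CommRing R] (x : X.Ob R), M.M x → N.M x
  app_add : ∀ {R : Type u} [CommRing R] (x : X.Ob R) (m m' : M.M x),
    app x (m + m') = app x m + app x m'
  app_smul : ∀ {R : Type u} [CommRing R] (x : X.Ob R) (r : R) (m : M.M x),
    app x (r • m) = r • app x m
  app_θ : ∀ {R S : Type u} [CommRing R] [CommRing S] (f : R →+* S) (x : X.Ob R)
    (y : X.Ob S) (h : X.mapOb f x = y) (m : M.M x),
    app y (M.θ f x y h m) = N.θ f x y h (app x m)
  app_ψ : ∀ {R : Type u} [CommRing R] {x y : X.Ob R} (α : X.Hom x y) (m : M.M x),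
    app y (M.ψ α m) = N.ψ α (app x m)

/-- The sheaf-theoretic essential image of `Φ : (X₀,X₁) → (Y₀,Y₁)` is all of `Y₀`: every point
`(R, y)` of `Y₀` admits a cover in the topology `T` such that each restriction of `y` is
isomorphic, in the groupoid over the member of the cover, to a point in the image of `Φ`. -/
def sheafEssentiallySurjective {X Y : PGpd.{u}} (Φ : PGpdHom X Y) (T : AffTopology.{u}) :
    Prop :=
  ∀ (R : Type u) [CommRing R] (y : Y.Ob R),
    ∃ c ∈ T.covers R, ∀ i, ∃ x : X.Ob (c.S i),
      Nonempty (Y.Hom (Φ.onOb x) (Y.mapOb (c.f i) y))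

/-!
At an arbitrary point `y`, the sheaf `N` is separated, so it suffices to compare `τ` and `σ`
after restricting along a cover of `y` on which `y` becomes isomorphic to points `Φ x`; an
isomorphism `α : Φ x ≅ y'` of the groupoid then transports the equality at `Φ x` to `y'`,
because morphisms of sheaves commute with the isomorphisms `ψ α`.
-/

theorem SheafHom.ext {X : PGpd.{u}} {T : AffTopology.{u}} {M N : SheafOn X T}
    {τ σ : SheafHom M N}
    (h : ∀ (S : Type u) [CommRing S] (x : X.Ob S) (m : M.M x), τ.app x m = σ.app x m) :
    τ = σ := by
  obtain ⟨a, _, _, _, _⟩ := τ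
  obtain ⟨b, _, _, _, _⟩ := σ
  obtain rfl : @a = @b := by
    funext S _ x m
    exact h S x m
  rfl

theorem SheafOn.ψ_ψ_ginv {X : PGpd.{u}} {T : AffTopology.{u}} (M : SheafOn X T)
    {S : Type u} [CommRing S] {x y : X.Ob S} (α : X.Hom x y) (m : M.M y) :
    M.ψ α (M.ψ (X.ginv α) m) = m := by
  rw [← M.ψ_gcomp, X.ginv_gcomp, M.ψ_gid]

theorem SheafOn.eq_of_θ_eq {X : PGpd.{u}} {T : AffTopology.{u}} (M : SheafOn X T)
    {S : Type u} [CommRing S] {c : RingCover S} (hc : c ∈ T.covers S) {x : X.Ob S}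
    {m m' : M.M x}
    (h : ∀ i, M.θ (c.f i) x (X.mapOb (c.f i) x) rfl m =
      M.θ (c.f i) x (X.mapOb (c.f i) x) rfl m') :
    m = m' :=
  (M.sheaf c hc x).1 m m' h

namespace SheafHom

variable {X : PGpd.{u}} {T : AffTopology.{u}} {M N : SheafOn X T} (τ σ : SheafHom M N)

theorem app_eq_of_hom {S : Type u} [CommRing S] {x y : X.Ob S} (α : X.Hom x y)
    (h : ∀ m : M.M x, τ.app x m = σ.app x m) (m : M.M y) : τ.app y m = σ.app y m := by
  rw [← M.ψ_ψ_ginv α m, τ.app_ψ, σ.app_ψ, h]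

theorem app_eq_of_cover {S : Type u} [CommRing S] {c : RingCover S} (hc : c ∈ T.covers S)
    {x : X.Ob S}
    (h : ∀ i (m : M.M (X.mapOb (c.f i) x)),
      τ.app (X.mapOb (c.f i) x) m = σ.app (X.mapOb (c.f i) x) m)
    (m : M.M x) : τ.app x m = σ.app x m :=
  N.eq_of_θ_eq hc fun i => by rw [← τ.app_θ, ← σ.app_θ, h]

end SheafHom

theorem pullback_faithful_of_sheaf_essentially_surjective
    {X Y : PGpd.{u}} (T : AffTopology.{u}) (Φ : PGpdHom X Y)
    (hsurj : sheafEssentiallySurjective Φ T)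
    (M N : SheafOn Y T) (τ σ : SheafHom M N)
    (hpull : ∀ (R : Type u) [CommRing R] (x : X.Ob R) (m : M.M (Φ.onOb x)),
      τ.app (Φ.onOb x) m = σ.app (Φ.onOb x) m) :
    τ = σ := by
  refine SheafHom.ext fun S _ y => ?_
  obtain ⟨c, hc, hlocal⟩ := hsurj S y
  refine τ.app_eq_of_cover σ hc fun i => ?_
  obtain ⟨x, ⟨α⟩⟩ := hlocal i
  exact τ.app_eq_of_hom σ α (hpull _ x)
end

section
/- Let Φ : (X₀, X₁) → (Y₀, Y₁) be a morphism of presheaves of groupoids on a site such that Φ(R) is a full functor of groupoids for every R, and whose sheaf-theoretic essential image is all of Y₀. Then the induced pullback functor Φ* : Sh(Y₀, Y₁) → Sh(X₀, X₁) on categories of sheaves of modules is full. -/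
set_option maxHeartbeats 1000000

universe u

open TensorProduct

variable {R : Type u} [CommRing R]

/-!
Over a point `z` of `Y₀` equipped with an isomorphism `γ : Φ x ≅ z`, the map
`ψ_γ ∘ t_x ∘ ψ_γ⁻¹ : M z → N z` is forced on any `σ` extending `t`. Fullness of `Φ` makes it
independent of the choice of `(x, γ)`, so these local maps are compatible with restriction and
with the `ψ`'s; by essential surjectivity every point has such lifts on a cover, and the local
maps glue in the sheaf `N`.
-/

namespace PGpd

variable (X : PGpd.{u})

theorem eq_ginv_of_gcomp_eq_gid {x y : X.Ob R} {α : X.Hom x y} {β : X.Hom y x}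
    (h : X.gcomp β α = X.gid y) : β = X.ginv α := by
  rw [← X.gcomp_id β, ← X.gcomp_ginv α, ← X.gcomp_assoc, h, X.id_gcomp]

theorem ginv_gid (x : X.Ob R) : X.ginv (X.gid x) = X.gid x :=
  (X.eq_ginv_of_gcomp_eq_gid (X.id_gcomp _)).symm

theorem ginv_gcomp_rev {x y z : X.Ob R} (α : X.Hom x y) (β : X.Hom y z) :
    X.ginv (X.gcomp α β) = X.gcomp (X.ginv β) (X.ginv α) := by
  refine (X.eq_ginv_of_gcomp_eq_gid ?_).symm
  rw [X.gcomp_assoc, ← X.gcomp_assoc (X.ginv α), X.ginv_gcomp, X.id_gcomp, X.ginv_gcomp]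

theorem mapHom_ginv {S : Type u} [CommRing S] (f : R →+* S) {x y : X.Ob R} (α : X.Hom x y) :
    X.mapHom f (X.ginv α) = X.ginv (X.mapHom f α) :=
  X.eq_ginv_of_gcomp_eq_gid (by rw [← X.mapHom_gcomp, X.ginv_gcomp, X.mapHom_gid])

def castHom {a a' b b' : X.Ob R} (ha : a = a') (hb : b = b') (α : X.Hom a b) : X.Hom a' b' :=
  ha ▸ hb ▸ α

theorem castHom_heq {a a' b b' : X.Ob R} (ha : a = a') (hb : b = b') (α : X.Hom a b) :
    HEq (X.castHom ha hb α) α := by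
  subst ha hb; rfl

theorem ginv_castHom {a a' b b' : X.Ob R} (ha : a = a') (hb : b = b') (α : X.Hom a b) :
    X.ginv (X.castHom ha hb α) = X.castHom hb ha (X.ginv α) := by
  subst ha hb; rfl

end PGpd

namespace PGpdHom

variable {X Y : PGpd.{u}} (Φ : PGpdHom X Y)

def Full : Prop :=
  ∀ (R : Type u) [CommRing R] (x y : X.Ob R) (β : Y.Hom (Φ.onOb x) (Φ.onOb y)),
    ∃ α : X.Hom x y, Φ.onHom α = β

structure Lift (z : Y.Ob R) : Type u where
  pt : X.Ob R
  iso : Y.Hom (Φ.onOb pt) z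

variable {Φ}

def Lift.map {S : Type u} [CommRing S] {z : Y.Ob R} (e : Φ.Lift z) (f : R →+* S)
    {z' : Y.Ob S} (h : Y.mapOb f z = z') : Φ.Lift z' :=
  ⟨X.mapOb f e.pt, Y.castHom (Φ.onOb_map f e.pt).symm h (Y.mapHom f e.iso)⟩

def Lift.trans {z z' : Y.Ob R} (e : Φ.Lift z) (δ : Y.Hom z z') : Φ.Lift z' :=
  ⟨e.pt, Y.gcomp e.iso δ⟩

end PGpdHom

namespace RingCover

noncomputable def pushRight (c : RingCover R) {T : Type u} [CommRing T] (g : R →+* T)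
    (i : c.ι) : c.S i →+* (c.push g).S i :=
  letI := (c.f i).toAlgebra
  letI := g.toAlgebra
  (Algebra.TensorProduct.includeRight : c.S i →ₐ[R] T ⊗[R] c.S i).toRingHom

theorem push_f_comp (c : RingCover R) {T : Type u} [CommRing T] (g : R →+* T) (i : c.ι) :
    ((c.push g).f i).comp g = (c.pushRight g i).comp (c.f i) := by
  let := (c.f i).toAlgebra
  let := g.toAlgebra
  exact Algebra.TensorProduct.includeLeftRingHom_comp_algebraMap

theorem pleft_comp_f (c : RingCover R) (j k : c.ι) :
    (c.pleft j k).comp (c.f j) = (c.pright j k).comp (c.f k) := by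
  let := (c.f j).toAlgebra
  let := (c.f k).toAlgebra
  exact Algebra.TensorProduct.includeLeftRingHom_comp_algebraMap

end RingCover

namespace SheafOn

variable {X : PGpd.{u}} {T : AffTopology.{u}} (M : SheafOn X T)
  {S S₁ S₂ : Type u} [CommRing S] [CommRing S₁] [CommRing S₂]

theorem θ_θ_eq_of_comp_eq {f₁ : R →+* S₁} {g₁ : S₁ →+* S} {f₂ : R →+* S₂} {g₂ : S₂ →+* S}
    (hc : g₁.comp f₁ = g₂.comp f₂) {x : X.Ob R} {x₁ : X.Ob S₁} {x₂ : X.Ob S₂} {z : X.Ob S}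
    (h₁ : X.mapOb f₁ x = x₁) (h₁' : X.mapOb g₁ x₁ = z)
    (h₂ : X.mapOb f₂ x = x₂) (h₂' : X.mapOb g₂ x₂ = z) (m : M.M x) :
    M.θ g₁ x₁ z h₁' (M.θ f₁ x x₁ h₁ m) = M.θ g₂ x₂ z h₂' (M.θ f₂ x x₂ h₂ m) := by
  have h : X.mapOb (g₁.comp f₁) x = z := by rw [X.mapOb_comp, h₁, h₁']
  rw [M.θ_comp f₁ g₁ x x₁ z h₁ h₁' h, M.θ_comp f₂ g₂ x x₂ z h₂ h₂' (hc ▸ h)]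
  congr

theorem θ_ψ (f : R →+* S) {a b : X.Ob R} (α : X.Hom a b) {a' b' : X.Ob S}
    (ha : X.mapOb f a = a') (hb : X.mapOb f b = b') (m : M.M a) :
    M.θ f b b' hb (M.ψ α m) = M.ψ (X.castHom ha hb (X.mapHom f α)) (M.θ f a a' ha m) :=
  M.ψ_natural f α a' b' ha hb _ (X.castHom_heq ha hb _).symm m

theorem eq_of_θ_eq_of_lift {X' : PGpd.{u}} {Φ : PGpdHom X' X}
    (hsurj : sheafEssentiallySurjective Φ T) {x : X.Ob R} {n n' : M.M x}
    (h : ∀ (S : Type u) [CommRing S] (g : R →+* S), Φ.Lift (X.mapOb g x) →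
      M.θ g x _ rfl n = M.θ g x _ rfl n') :
    n = n' := by
  obtain ⟨c, hc, hlift⟩ := hsurj R x
  refine (M.sheaf c hc x).1 n n' fun i => ?_
  obtain ⟨x', ⟨γ⟩⟩ := hlift i
  exact h _ (c.f i) ⟨x', γ⟩

end SheafOn

/-- A morphism `Φ*M → Φ*N` of sheaves over `(X₀, X₁)`. -/
structure PullbackHom {X Y : PGpd.{u}} {T : AffTopology.{u}} (Φ : PGpdHom X Y)
    (M N : SheafOn Y T) : Type (u + 1) where
  app : ∀ (R : Type u) [CommRing R] (x : X.Ob R), M.M (Φ.onOb x) → N.M (Φ.onOb x)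
  app_add : ∀ (R : Type u) [CommRing R] (x : X.Ob R) (m m' : M.M (Φ.onOb x)),
    app R x (m + m') = app R x m + app R x m'
  app_smul : ∀ (R : Type u) [CommRing R] (x : X.Ob R) (r : R) (m : M.M (Φ.onOb x)),
    app R x (r • m) = r • app R x m
  app_θ : ∀ (R S : Type u) [CommRing R] [CommRing S] (f : R →+* S) (x : X.Ob R)
    (m : M.M (Φ.onOb x)),
    app S (X.mapOb f x)
      (M.θ f (Φ.onOb x) (Φ.onOb (X.mapOb f x)) (Φ.onOb_map f x).symm m) =
    N.θ f (Φ.onOb x) (Φ.onOb (X.mapOb f x)) (Φ.onOb_map f x).symm (app R x m)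
  app_ψ : ∀ (R : Type u) [CommRing R] (x y : X.Ob R) (α : X.Hom x y) (m : M.M (Φ.onOb x)),
    app R y (M.ψ (Φ.onHom α) m) = N.ψ (Φ.onHom α) (app R x m)

namespace PullbackHom

variable {X Y : PGpd.{u}} {T : AffTopology.{u}} {Φ : PGpdHom X Y} {M N : SheafOn Y T}
  (τ : PullbackHom Φ M N) {S : Type u} [CommRing S]

def localMap {z : Y.Ob R} (e : Φ.Lift z) (m : M.M z) : N.M z :=
  N.ψ e.iso (τ.app R e.pt (M.ψ (Y.ginv e.iso) m))

theorem localMap_add {z : Y.Ob R} (e : Φ.Lift z) (m m' : M.M z) :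
    τ.localMap e (m + m') = τ.localMap e m + τ.localMap e m' := by
  rw [localMap, M.ψ_add, τ.app_add, N.ψ_add]; rfl

theorem localMap_smul {z : Y.Ob R} (e : Φ.Lift z) (r : R) (m : M.M z) :
    τ.localMap e (r • m) = r • τ.localMap e m := by
  rw [localMap, M.ψ_smul, τ.app_smul, N.ψ_smul]; rfl

theorem localMap_gid (x : X.Ob R) (m : M.M (Φ.onOb x)) :
    τ.localMap ⟨x, Y.gid _⟩ m = τ.app R x m := by
  rw [localMap, Y.ginv_gid, M.ψ_gid, N.ψ_gid]

theorem localMap_eq (hfull : Φ.Full) {z : Y.Ob R} (e e' : Φ.Lift z) (m : M.M z) :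
    τ.localMap e m = τ.localMap e' m := by
  obtain ⟨α, hα⟩ := hfull R e.pt e'.pt (Y.gcomp e.iso (Y.ginv e'.iso))
  have hm : M.ψ (Y.ginv e'.iso) m = M.ψ (Φ.onHom α) (M.ψ (Y.ginv e.iso) m) := by
    rw [hα, ← M.ψ_gcomp, ← Y.gcomp_assoc, Y.ginv_gcomp, Y.id_gcomp]
  rw [localMap, localMap, hm, τ.app_ψ, ← N.ψ_gcomp, hα, Y.gcomp_assoc, Y.ginv_gcomp,
    Y.gcomp_id]

theorem θ_localMap (hfull : Φ.Full) (f : R →+* S) {z : Y.Ob R} {z' : Y.Ob S}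
    (h : Y.mapOb f z = z') (e : Φ.Lift z) (e' : Φ.Lift z') (m : M.M z) :
    N.θ f z z' h (τ.localMap e m) = τ.localMap e' (M.θ f z z' h m) := by
  rw [τ.localMap_eq hfull e' (e.map f h), localMap, localMap,
    N.θ_ψ f e.iso (Φ.onOb_map f e.pt).symm h, ← τ.app_θ,
    M.θ_ψ f (Y.ginv e.iso) h (Φ.onOb_map f e.pt).symm, Y.mapHom_ginv, ← Y.ginv_castHom]
  rfl

theorem ψ_localMap (hfull : Φ.Full) {z z' : Y.Ob R} (δ : Y.Hom z z') (e : Φ.Lift z)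
    (e' : Φ.Lift z') (m : M.M z) :
    N.ψ δ (τ.localMap e m) = τ.localMap e' (M.ψ δ m) := by
  have hm : M.ψ (Y.ginv (Y.gcomp e.iso δ)) (M.ψ δ m) = M.ψ (Y.ginv e.iso) m := by
    rw [← M.ψ_gcomp, Y.ginv_gcomp_rev, ← Y.gcomp_assoc, Y.gcomp_ginv, Y.id_gcomp]
  rw [τ.localMap_eq hfull e' (e.trans δ), localMap, localMap, ← N.ψ_gcomp]
  exact congrArg _ (congrArg _ hm.symm)

def IsLocallyGiven {y : Y.Ob R} (m : M.M y) (n : N.M y) : Prop :=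
  ∀ (S : Type u) [CommRing S] (g : R →+* S) (z : Y.Ob S) (h : Y.mapOb g y = z) (e : Φ.Lift z),
    N.θ g y z h n = τ.localMap e (M.θ g y z h m)

theorem exists_θ_eq_localMap_of_cover (hfull : Φ.Full) {c : RingCover R}
    (hc : c ∈ T.covers R) {y : Y.Ob R} (e : ∀ i, Φ.Lift (Y.mapOb (c.f i) y)) (m : M.M y) :
    ∃ n : N.M y, ∀ i, N.θ (c.f i) y _ rfl n = τ.localMap (e i) (M.θ (c.f i) y _ rfl m) := by
  refine (N.sheaf c hc y).2 _ fun j k w hj hk => ?_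
  let e' := (e j).map (c.pleft j k) hj
  rw [τ.θ_localMap hfull _ hj _ e', τ.θ_localMap hfull _ hk _ e',
    M.θ_θ_eq_of_comp_eq (c.pleft_comp_f j k) rfl hj rfl hk]

theorem isLocallyGiven_of_cover (hfull : Φ.Full) {c : RingCover R} (hc : c ∈ T.covers R)
    {y : Y.Ob R} (e : ∀ i, Φ.Lift (Y.mapOb (c.f i) y)) {m : M.M y} {n : N.M y}
    (hn : ∀ i, N.θ (c.f i) y _ rfl n = τ.localMap (e i) (M.θ (c.f i) y _ rfl m)) :
    τ.IsLocallyGiven m n := by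
  intro S _ g z h e₀
  subst h
  refine (N.sheaf (c.push g) (T.push_mem g c hc) _).1 _ _ fun (i : c.ι) => ?_
  have hcomm := c.push_f_comp g i
  have hw : Y.mapOb (c.pushRight g i) (Y.mapOb (c.f i) y) =
      Y.mapOb ((c.push g).f i) (Y.mapOb g y) := by
    rw [← Y.mapOb_comp, ← Y.mapOb_comp, hcomm]
  let e' := e₀.map ((c.push g).f i) rfl
  calc N.θ ((c.push g).f i) _ _ rfl (N.θ g y _ rfl n)
      = N.θ (c.pushRight g i) _ _ hw (N.θ (c.f i) y _ rfl n) :=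
        N.θ_θ_eq_of_comp_eq hcomm rfl rfl rfl hw n
    _ = τ.localMap e' (M.θ (c.pushRight g i) _ _ hw (M.θ (c.f i) y _ rfl m)) := by
        rw [hn, τ.θ_localMap hfull]
    _ = τ.localMap e' (M.θ ((c.push g).f i) _ _ rfl (M.θ g y _ rfl m)) := by
        rw [M.θ_θ_eq_of_comp_eq hcomm rfl rfl rfl hw m]
    _ = N.θ ((c.push g).f i) _ _ rfl (τ.localMap e₀ (M.θ g y _ rfl m)) :=
        (τ.θ_localMap hfull _ rfl _ _ _).symm

theorem exists_isLocallyGiven (hfull : Φ.Full) (hsurj : sheafEssentiallySurjective Φ T)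
    {y : Y.Ob R} (m : M.M y) : ∃ n : N.M y, τ.IsLocallyGiven m n := by
  obtain ⟨c, hc, hlift⟩ := hsurj R y
  let e i : Φ.Lift (Y.mapOb (c.f i) y) := ⟨(hlift i).choose, (hlift i).choose_spec.some⟩
  obtain ⟨n, hn⟩ := τ.exists_θ_eq_localMap_of_cover hfull hc e m
  exact ⟨n, τ.isLocallyGiven_of_cover hfull hc e hn⟩

variable (hfull : Φ.Full) (hsurj : sheafEssentiallySurjective Φ T)

noncomputable def descendApp {y : Y.Ob R} (m : M.M y) : N.M y :=
  (τ.exists_isLocallyGiven hfull hsurj m).choose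

theorem θ_descendApp {z : Y.Ob S} (e : Φ.Lift z) {y : Y.Ob R} (m : M.M y) (g : R →+* S)
    (h : Y.mapOb g y = z) :
    N.θ g y z h (τ.descendApp hfull hsurj m) = τ.localMap e (M.θ g y z h m) :=
  (τ.exists_isLocallyGiven hfull hsurj m).choose_spec S g z h e

theorem descendApp_add {y : Y.Ob R} (m m' : M.M y) :
    τ.descendApp hfull hsurj (m + m') =
      τ.descendApp hfull hsurj m + τ.descendApp hfull hsurj m' :=
  N.eq_of_θ_eq_of_lift hsurj fun _ _ g e => by
    simp only [N.θ_add, τ.θ_descendApp hfull hsurj e, M.θ_add, τ.localMap_add]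

theorem descendApp_smul {y : Y.Ob R} (r : R) (m : M.M y) :
    τ.descendApp hfull hsurj (r • m) = r • τ.descendApp hfull hsurj m :=
  N.eq_of_θ_eq_of_lift hsurj fun _ _ g e => by
    rw [N.θ_smul, τ.θ_descendApp hfull hsurj e, τ.θ_descendApp hfull hsurj e, M.θ_smul,
      τ.localMap_smul]

theorem descendApp_θ (f : R →+* S) {y : Y.Ob R} {y' : Y.Ob S} (h : Y.mapOb f y = y')
    (m : M.M y) :
    τ.descendApp hfull hsurj (M.θ f y y' h m) = N.θ f y y' h (τ.descendApp hfull hsurj m) :=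
  N.eq_of_θ_eq_of_lift hsurj fun _ _ g e => by
    have hgf : Y.mapOb (g.comp f) y = Y.mapOb g y' := by rw [Y.mapOb_comp, h]
    rw [τ.θ_descendApp hfull hsurj e, N.θ_comp f g y y' _ h rfl hgf,
      M.θ_comp f g y y' _ h rfl hgf, τ.θ_descendApp hfull hsurj e]

theorem descendApp_ψ {y y' : Y.Ob R} (δ : Y.Hom y y') (m : M.M y) :
    τ.descendApp hfull hsurj (M.ψ δ m) = N.ψ δ (τ.descendApp hfull hsurj m) :=
  N.eq_of_θ_eq_of_lift hsurj fun _ _ g e => by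
    let e₀ : Φ.Lift (Y.mapOb g y) := e.trans (Y.ginv (Y.castHom rfl rfl (Y.mapHom g δ)))
    rw [τ.θ_descendApp hfull hsurj e, M.θ_ψ g δ rfl rfl, N.θ_ψ g δ rfl rfl,
      τ.θ_descendApp hfull hsurj e₀, τ.ψ_localMap hfull]

theorem descendApp_onOb (x : X.Ob R) (m : M.M (Φ.onOb x)) :
    τ.descendApp hfull hsurj m = τ.app R x m := by
  have h := τ.θ_descendApp hfull hsurj ⟨x, Y.gid _⟩ m (RingHom.id R) (Y.mapOb_id _)
  rwa [N.θ_id, M.θ_id, τ.localMap_gid] at h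

noncomputable def descend : SheafHom M N where
  app _ := τ.descendApp hfull hsurj
  app_add _ := τ.descendApp_add hfull hsurj
  app_smul _ := τ.descendApp_smul hfull hsurj
  app_θ f _ _ h m := τ.descendApp_θ hfull hsurj f h m
  app_ψ := τ.descendApp_ψ hfull hsurj

end PullbackHom

theorem pullback_full_of_full_and_sheaf_essentially_surjective
    {X Y : PGpd.{u}} (T : AffTopology.{u}) (Φ : PGpdHom X Y)
    (hfull : ∀ (R : Type u) [CommRing R] (x y : X.Ob R)
      (β : Y.Hom (Φ.onOb x) (Φ.onOb y)), ∃ α : X.Hom x y, Φ.onHom α = β)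
    (hsurj : sheafEssentiallySurjective Φ T)
    (M N : SheafOn Y T)
    (t : ∀ (R : Type u) [CommRing R] (x : X.Ob R), M.M (Φ.onOb x) → N.M (Φ.onOb x))
    (t_add : ∀ (R : Type u) [CommRing R] (x : X.Ob R) (m m' : M.M (Φ.onOb x)),
      t R x (m + m') = t R x m + t R x m')
    (t_smul : ∀ (R : Type u) [CommRing R] (x : X.Ob R) (r : R) (m : M.M (Φ.onOb x)),
      t R x (r • m) = r • t R x m)
    (t_θ : ∀ (R S : Type u) [CommRing R] [CommRing S] (f : R →+* S) (x : X.Ob R)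
      (m : M.M (Φ.onOb x)),
      t S (X.mapOb f x)
        (M.θ f (Φ.onOb x) (Φ.onOb (X.mapOb f x)) (Φ.onOb_map f x).symm m) =
      N.θ f (Φ.onOb x) (Φ.onOb (X.mapOb f x)) (Φ.onOb_map f x).symm (t R x m))
    (t_ψ : ∀ (R : Type u) [CommRing R] (x y : X.Ob R) (α : X.Hom x y)
      (m : M.M (Φ.onOb x)),
      t R y (M.ψ (Φ.onHom α) m) = N.ψ (Φ.onHom α) (t R x m)) :
    ∃ σ : SheafHom M N, ∀ (R : Type u) [CommRing R] (x : X.Ob R) (m : M.M (Φ.onOb x)),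
      σ.app (Φ.onOb x) m = t R x m := by
  let τ : PullbackHom Φ M N := ⟨t, t_add, t_smul, t_θ, t_ψ⟩
  exact ⟨τ.descend hfull hsurj, fun R _ x m => τ.descendApp_onOb hfull hsurj x m⟩
end

section
/- Let f = (f₀, f₁) : (A, Γ) → (B, Σ) be a map of commutative Hopf algebroids. Then f* : (Spec B, Spec Σ) → (Spec A, Spec Γ) is full (i.e., f*(R) is a full functor of groupoids for every commutative ring R) if and only if the canonical ring map B ⊗_A Γ ⊗_A B → Σ, b ⊗ γ ⊗ b' ↦ η_L(b)·f₁(γ)·η_R(b'), is a split monomorphism of commutative rings. -/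
set_option maxHeartbeats 1000000

universe u

open TensorProduct

/-- A commutative Hopf algebroid `(A, Γ)`, encoded (following Haynes Miller, as recalled in the
paper) as a pair of commutative rings such that `(Spec A, Spec Γ)` is a presheaf of groupoids:
we record the structure ring maps `ηL, ηR : A → Γ`, `ε : Γ → A`, the conjugation `c : Γ → Γ`,
and the composition operation on points `comp`, natural in `R`, which is the functor-of-points
incarnation of the diagonal `Δ`.  A point `α : Γ →+* R` is a morphism from `α ∘ ηL` to
`α ∘ ηR` in the groupoid `(Spec A, Spec Γ)(R)`. -/
structure HopfAlgebroid (A : Type u) (Γ : Type u) [CommRing A] [CommRing Γ] : Type (u + 1) where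
  ηL : A →+* Γ
  ηR : A →+* Γ
  ε : Γ →+* A
  c : Γ →+* Γ
  /-- composition of the morphisms `α : x → y` and `β : y → z`, giving `β ∘ α : x → z`. -/
  comp : ∀ {R : Type u} [CommRing R] (α β : Γ →+* R), α.comp ηR = β.comp ηL → (Γ →+* R)
  ε_ηL : ε.comp ηL = RingHom.id A
  ε_ηR : ε.comp ηR = RingHom.id A
  c_ηL : c.comp ηL = ηR
  c_ηR : c.comp ηR = ηL
  c_c : c.comp c = RingHom.id Γ
  comp_ηL : ∀ {R : Type u} [CommRing R] (α β : Γ →+* R) (h : α.comp ηR = β.comp ηL),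
    (comp α β h).comp ηL = α.comp ηL
  comp_ηR : ∀ {R : Type u} [CommRing R] (α β : Γ →+* R) (h : α.comp ηR = β.comp ηL),
    (comp α β h).comp ηR = β.comp ηR
  comp_natural : ∀ {R S : Type u} [CommRing R] [CommRing S] (g : R →+* S) (α β : Γ →+* R)
    (h : α.comp ηR = β.comp ηL) (h' : (g.comp α).comp ηR = (g.comp β).comp ηL),
    g.comp (comp α β h) = comp (g.comp α) (g.comp β) h'
  id_comp : ∀ {R : Type u} [CommRing R] (α : Γ →+* R)
    (h : ((α.comp ηL).comp ε).comp ηR = α.comp ηL), comp ((α.comp ηL).comp ε) α h = α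
  comp_id : ∀ {R : Type u} [CommRing R] (α : Γ →+* R)
    (h : α.comp ηR = ((α.comp ηR).comp ε).comp ηL), comp α ((α.comp ηR).comp ε) h = α
  comp_assoc : ∀ {R : Type u} [CommRing R] (α β γ : Γ →+* R)
    (h1 : α.comp ηR = β.comp ηL) (h2 : (comp α β h1).comp ηR = γ.comp ηL)
    (h3 : β.comp ηR = γ.comp ηL) (h4 : α.comp ηR = (comp β γ h3).comp ηL),
    comp (comp α β h1) γ h2 = comp α (comp β γ h3) h4
  comp_inv : ∀ {R : Type u} [CommRing R] (α : Γ →+* R)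
    (h : α.comp ηR = (α.comp c).comp ηL), comp α (α.comp c) h = (α.comp ηL).comp ε

/-- A map of commutative Hopf algebroids `(A, Γ) → (B, Σ)`: a pair of ring maps commuting with
all the structure maps. -/
structure HopfAlgebroidMap {A Γ B Sg : Type u} [CommRing A] [CommRing Γ] [CommRing B]
    [CommRing Sg] (H : HopfAlgebroid A Γ) (K : HopfAlgebroid B Sg) : Type (u + 1) where
  f₀ : A →+* B
  f₁ : Γ →+* Sg
  ηL_comm : f₁.comp H.ηL = K.ηL.comp f₀
  ηR_comm : f₁.comp H.ηR = K.ηR.comp f₀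
  ε_comm : f₀.comp H.ε = K.ε.comp f₁
  c_comm : f₁.comp H.c = K.c.comp f₁
  comp_comm : ∀ {R : Type u} [CommRing R] (α β : Sg →+* R) (h : α.comp K.ηR = β.comp K.ηL)
    (h' : (α.comp f₁).comp H.ηR = (β.comp f₁).comp H.ηL),
    (K.comp α β h).comp f₁ = H.comp (α.comp f₁) (β.comp f₁) h'

section Tensors

variable {A Γ B : Type u} [CommRing A] [CommRing Γ] [CommRing B]

/-- The tensor product `Γ ⊗[A] B`, where `Γ` is an `A`-algebra via `ηR` and `B` via `f₀`. -/
def GammaB (H : HopfAlgebroid A Γ) (f₀ : A →+* B) : Type u :=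
  letI := H.ηR.toAlgebra
  letI := f₀.toAlgebra
  Γ ⊗[A] B

noncomputable instance (H : HopfAlgebroid A Γ) (f₀ : A →+* B) : CommRing (GammaB H f₀) :=
  letI := H.ηR.toAlgebra
  letI := f₀.toAlgebra
  (inferInstance : CommRing (Γ ⊗[A] B))

/-- The inclusion `Γ → Γ ⊗[A] B`. -/
noncomputable def inclGamma (H : HopfAlgebroid A Γ) (f₀ : A →+* B) : Γ →+* GammaB H f₀ :=
  letI := H.ηR.toAlgebra
  letI := f₀.toAlgebra
  Algebra.TensorProduct.includeLeftRingHom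

/-- The inclusion `B → Γ ⊗[A] B`. -/
noncomputable def inclB (H : HopfAlgebroid A Γ) (f₀ : A →+* B) : B →+* GammaB H f₀ :=
  letI := H.ηR.toAlgebra
  letI := f₀.toAlgebra
  (Algebra.TensorProduct.includeRight : B →ₐ[A] Γ ⊗[A] B).toRingHom

/-- The triple tensor product `B ⊗[A] Γ ⊗[A] B`, realized as `B ⊗[A] (Γ ⊗[A] B)`, where the
left copy of `B` is an `A`-algebra via `f₀`, the left `A`-action on `Γ` is via `ηL`
and the right one via `ηR`. -/
def BGammaB (H : HopfAlgebroid A Γ) (f₀ : A →+* B) : Type u :=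
  letI := f₀.toAlgebra
  letI := ((inclGamma H f₀).comp H.ηL).toAlgebra
  B ⊗[A] GammaB H f₀

noncomputable instance (H : HopfAlgebroid A Γ) (f₀ : A →+* B) : CommRing (BGammaB H f₀) :=
  letI := f₀.toAlgebra
  letI := ((inclGamma H f₀).comp H.ηL).toAlgebra
  (inferInstance : CommRing (B ⊗[A] GammaB H f₀))

/-- The inclusion of `B` as the left tensor factor of `B ⊗[A] Γ ⊗[A] B`. -/
noncomputable def incl₁ (H : HopfAlgebroid A Γ) (f₀ : A →+* B) : B →+* BGammaB H f₀ :=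
  letI := f₀.toAlgebra
  letI := ((inclGamma H f₀).comp H.ηL).toAlgebra
  Algebra.TensorProduct.includeLeftRingHom

/-- The inclusion of `Γ` as the middle tensor factor of `B ⊗[A] Γ ⊗[A] B`. -/
noncomputable def incl₂ (H : HopfAlgebroid A Γ) (f₀ : A →+* B) : Γ →+* BGammaB H f₀ :=
  letI := f₀.toAlgebra
  letI := ((inclGamma H f₀).comp H.ηL).toAlgebra
  ((Algebra.TensorProduct.includeRight :
      GammaB H f₀ →ₐ[A] B ⊗[A] GammaB H f₀).toRingHom).comp (inclGamma H f₀)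

/-- The inclusion of `B` as the right tensor factor of `B ⊗[A] Γ ⊗[A] B`. -/
noncomputable def incl₃ (H : HopfAlgebroid A Γ) (f₀ : A →+* B) : B →+* BGammaB H f₀ :=
  letI := f₀.toAlgebra
  letI := ((inclGamma H f₀).comp H.ηL).toAlgebra
  ((Algebra.TensorProduct.includeRight :
      GammaB H f₀ →ₐ[A] B ⊗[A] GammaB H f₀).toRingHom).comp (inclB H f₀)

end Tensors

section CanonicalMap

variable {A Γ B Sg : Type u} [CommRing A] [CommRing Γ] [CommRing B] [CommRing Sg]
variable {H : HopfAlgebroid A Γ} {K : HopfAlgebroid B Sg}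

/-- Intermediate step: the ring map `Γ ⊗[A] B → Σ`, `γ ⊗ b' ↦ f₁(γ) · ηR(b')`. -/
noncomputable def canonicalMapStep (φ : HopfAlgebroidMap H K) : GammaB H φ.f₀ →+* Sg :=
  letI := φ.f₀.toAlgebra
  letI := H.ηR.toAlgebra
  letI : Algebra A Sg := (φ.f₁.comp H.ηR).toAlgebra
  (Algebra.TensorProduct.productMap
    (⟨φ.f₁, fun _ => rfl⟩ : Γ →ₐ[A] Sg)
    (⟨K.ηR, fun a => (RingHom.congr_fun φ.ηR_comm a).symm⟩ : B →ₐ[A] Sg)).toRingHom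

lemma canonicalMapStep_incl (φ : HopfAlgebroidMap H K) (x : Γ) :
    canonicalMapStep φ ((inclGamma H φ.f₀) x) = φ.f₁ x := by
  letI := φ.f₀.toAlgebra
  letI := H.ηR.toAlgebra
  letI : Algebra A Sg := (φ.f₁.comp H.ηR).toAlgebra
  unfold canonicalMapStep inclGamma
  show (Algebra.TensorProduct.productMap _ _) (x ⊗ₜ[A] (1 : B)) = φ.f₁ x
  rw [Algebra.TensorProduct.productMap_left_apply]
  rfl

/-- The canonical ring map `B ⊗[A] Γ ⊗[A] B → Σ`,
`b ⊗ γ ⊗ b' ↦ ηL(b) · f₁(γ) · ηR(b')`, associated to a map of Hopf algebroids. -/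
noncomputable def canonicalMap (φ : HopfAlgebroidMap H K) : BGammaB H φ.f₀ →+* Sg :=
  letI := φ.f₀.toAlgebra
  letI := ((inclGamma H φ.f₀).comp H.ηL).toAlgebra
  letI : Algebra A Sg := (K.ηL.comp φ.f₀).toAlgebra
  (Algebra.TensorProduct.productMap
    (⟨K.ηL, fun _ => rfl⟩ : B →ₐ[A] Sg)
    (⟨canonicalMapStep φ, fun r => by
      show canonicalMapStep φ ((inclGamma H φ.f₀) (H.ηL r)) = (K.ηL.comp φ.f₀) r
      rw [canonicalMapStep_incl]
      exact RingHom.congr_fun φ.ηL_comm r⟩ : GammaB H φ.f₀ →ₐ[A] Sg)).toRingHom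

end CanonicalMap

/-! A ring map `c : S → T` is a split monomorphism iff every ring map out of `S` extends
along `c` (extend the identity of `S`). Ring maps `B ⊗[A] Γ ⊗[A] B → R` are exactly the triples
`(x, β, y)` with `β : f*(x) → f*(y)` in `(Spec A, Spec Γ)(R)`, and `α : Σ → R` extends such a
triple along the canonical map exactly when `α : x → y` lifts `β`. So fullness and splitting
both say that every such triple extends. -/

theorem RingHom.exists_comp_eq_id_iff_forall_exists_comp_eq {S T : Type u} [CommRing S]
    [CommRing T] (f : S →+* T) :
    (∃ r : T →+* S, r.comp f = RingHom.id S) ↔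
      ∀ (R : Type u) [CommRing R] (g : S →+* R), ∃ α : T →+* R, α.comp f = g := by
  constructor
  · rintro ⟨r, hr⟩ R _ g
    exact ⟨g.comp r, by rw [RingHom.comp_assoc, hr, RingHom.comp_id]⟩
  · intro h
    exact h S (RingHom.id S)

namespace GammaB

variable {A Γ B : Type u} [CommRing A] [CommRing Γ] [CommRing B]
  {H : HopfAlgebroid A Γ} {f₀ : A →+* B}

noncomputable def lift {R : Type*} [CommRing R] (β : Γ →+* R) (y : B →+* R)
    (h : β.comp H.ηR = y.comp f₀) : GammaB H f₀ →+* R :=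
  letI := f₀.toAlgebra
  letI := H.ηR.toAlgebra
  letI : Algebra A R := (β.comp H.ηR).toAlgebra
  (Algebra.TensorProduct.productMap
    (⟨β, fun _ => rfl⟩ : Γ →ₐ[A] R)
    (⟨y, fun a => (RingHom.congr_fun h a).symm⟩ : B →ₐ[A] R)).toRingHom

variable {R : Type*} [CommRing R] (β : Γ →+* R) (y : B →+* R) (h : β.comp H.ηR = y.comp f₀)

theorem lift_comp_inclGamma : (lift β y h).comp (inclGamma H f₀) = β := by
  let := f₀.toAlgebra
  let := H.ηR.toAlgebra
  let : Algebra A R := (β.comp H.ηR).toAlgebra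
  ext γ
  exact Algebra.TensorProduct.productMap_left_apply _ _ γ

theorem lift_comp_inclB : (lift β y h).comp (inclB H f₀) = y := by
  let := f₀.toAlgebra
  let := H.ηR.toAlgebra
  let : Algebra A R := (β.comp H.ηR).toAlgebra
  ext b
  exact Algebra.TensorProduct.productMap_right_apply _ _ b

theorem ringHom_ext {C : Type*} [Semiring C] {f g : GammaB H f₀ →+* C}
    (hΓ : f.comp (inclGamma H f₀) = g.comp (inclGamma H f₀))
    (hB : f.comp (inclB H f₀) = g.comp (inclB H f₀)) : f = g :=
  letI := f₀.toAlgebra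
  letI := H.ηR.toAlgebra
  Algebra.TensorProduct.ringHom_ext hΓ hB

theorem inclGamma_comp_ηR : (inclGamma H f₀).comp H.ηR = (inclB H f₀).comp f₀ :=
  letI := f₀.toAlgebra
  letI := H.ηR.toAlgebra
  Algebra.TensorProduct.includeLeftRingHom_comp_algebraMap

end GammaB

namespace BGammaB

variable {A Γ B : Type u} [CommRing A] [CommRing Γ] [CommRing B]
  {H : HopfAlgebroid A Γ} {f₀ : A →+* B}

theorem incl₂_comp_ηL : (incl₂ H f₀).comp H.ηL = (incl₁ H f₀).comp f₀ :=
  letI := f₀.toAlgebra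
  letI := ((inclGamma H f₀).comp H.ηL).toAlgebra
  Algebra.TensorProduct.includeLeftRingHom_comp_algebraMap.symm

theorem incl₂_comp_ηR : (incl₂ H f₀).comp H.ηR = (incl₃ H f₀).comp f₀ :=
  letI := f₀.toAlgebra
  letI := ((inclGamma H f₀).comp H.ηL).toAlgebra
  congrArg (Algebra.TensorProduct.includeRight (R := A) (A := B)).toRingHom.comp
    GammaB.inclGamma_comp_ηR

theorem ringHom_ext {C : Type*} [Semiring C] {f g : BGammaB H f₀ →+* C}
    (h₁ : f.comp (incl₁ H f₀) = g.comp (incl₁ H f₀))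
    (h₂ : f.comp (incl₂ H f₀) = g.comp (incl₂ H f₀))
    (h₃ : f.comp (incl₃ H f₀) = g.comp (incl₃ H f₀)) : f = g :=
  letI := f₀.toAlgebra
  letI := ((inclGamma H f₀).comp H.ηL).toAlgebra
  Algebra.TensorProduct.ringHom_ext h₁ (GammaB.ringHom_ext h₂ h₃)

noncomputable def lift {R : Type*} [CommRing R] (x : B →+* R) (β : Γ →+* R) (y : B →+* R)
    (hL : β.comp H.ηL = x.comp f₀) (hR : β.comp H.ηR = y.comp f₀) : BGammaB H f₀ →+* R :=
  letI := f₀.toAlgebra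
  letI := ((inclGamma H f₀).comp H.ηL).toAlgebra
  letI : Algebra A R := (x.comp f₀).toAlgebra
  (Algebra.TensorProduct.productMap
    (⟨x, fun _ => rfl⟩ : B →ₐ[A] R)
    (⟨GammaB.lift β y hR, fun a =>
      (RingHom.congr_fun (GammaB.lift_comp_inclGamma β y hR) (H.ηL a)).trans
        (RingHom.congr_fun hL a)⟩ : GammaB H f₀ →ₐ[A] R)).toRingHom

variable {R : Type*} [CommRing R] (x : B →+* R) (β : Γ →+* R) (y : B →+* R)
  (hL : β.comp H.ηL = x.comp f₀) (hR : β.comp H.ηR = y.comp f₀)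

theorem lift_comp_incl₁ : (lift x β y hL hR).comp (incl₁ H f₀) = x := by
  let := f₀.toAlgebra
  let := ((inclGamma H f₀).comp H.ηL).toAlgebra
  let : Algebra A R := (x.comp f₀).toAlgebra
  ext b
  exact Algebra.TensorProduct.productMap_left_apply _ _ b

theorem lift_comp_incl₂ : (lift x β y hL hR).comp (incl₂ H f₀) = β := by
  let := f₀.toAlgebra
  let := ((inclGamma H f₀).comp H.ηL).toAlgebra
  let : Algebra A R := (x.comp f₀).toAlgebra
  ext γ
  exact (Algebra.TensorProduct.productMap_right_apply _ _ _).trans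
    (RingHom.congr_fun (GammaB.lift_comp_inclGamma β y hR) γ)

theorem lift_comp_incl₃ : (lift x β y hL hR).comp (incl₃ H f₀) = y := by
  let := f₀.toAlgebra
  let := ((inclGamma H f₀).comp H.ηL).toAlgebra
  let : Algebra A R := (x.comp f₀).toAlgebra
  ext b
  exact (Algebra.TensorProduct.productMap_right_apply _ _ _).trans
    (RingHom.congr_fun (GammaB.lift_comp_inclB β y hR) b)

theorem comp_lift {S : Type*} [CommRing S] (g : R →+* S) :
    g.comp (lift x β y hL hR) =
      lift (g.comp x) (g.comp β) (g.comp y)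
        (by rw [RingHom.comp_assoc, hL, RingHom.comp_assoc])
        (by rw [RingHom.comp_assoc, hR, RingHom.comp_assoc]) :=
  ringHom_ext
    (by rw [RingHom.comp_assoc, lift_comp_incl₁, lift_comp_incl₁])
    (by rw [RingHom.comp_assoc, lift_comp_incl₂, lift_comp_incl₂])
    (by rw [RingHom.comp_assoc, lift_comp_incl₃, lift_comp_incl₃])

theorem lift_inj {x' : B →+* R} {β' : Γ →+* R} {y' : B →+* R}
    (hL' : β'.comp H.ηL = x'.comp f₀) (hR' : β'.comp H.ηR = y'.comp f₀) :
    lift x β y hL hR = lift x' β' y' hL' hR' ↔ x = x' ∧ β = β' ∧ y = y' := by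
  constructor
  · intro h
    refine ⟨?_, ?_, ?_⟩
    · rw [← lift_comp_incl₁ x β y hL hR, h, lift_comp_incl₁]
    · rw [← lift_comp_incl₂ x β y hL hR, h, lift_comp_incl₂]
    · rw [← lift_comp_incl₃ x β y hL hR, h, lift_comp_incl₃]
  · rintro ⟨rfl, rfl, rfl⟩
    rfl

theorem comp_incl₂_comp_ηL (g : BGammaB H f₀ →+* R) :
    (g.comp (incl₂ H f₀)).comp H.ηL = (g.comp (incl₁ H f₀)).comp f₀ := by
  rw [RingHom.comp_assoc, incl₂_comp_ηL, RingHom.comp_assoc]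

theorem comp_incl₂_comp_ηR (g : BGammaB H f₀ →+* R) :
    (g.comp (incl₂ H f₀)).comp H.ηR = (g.comp (incl₃ H f₀)).comp f₀ := by
  rw [RingHom.comp_assoc, incl₂_comp_ηR, RingHom.comp_assoc]

theorem lift_comp_incl (g : BGammaB H f₀ →+* R) :
    lift (g.comp (incl₁ H f₀)) (g.comp (incl₂ H f₀)) (g.comp (incl₃ H f₀))
      (comp_incl₂_comp_ηL g) (comp_incl₂_comp_ηR g) = g :=
  ringHom_ext (lift_comp_incl₁ ..) (lift_comp_incl₂ ..) (lift_comp_incl₃ ..)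

end BGammaB

section CanonicalMap

variable {A Γ B Sg : Type u} [CommRing A] [CommRing Γ] [CommRing B] [CommRing Sg]
  {H : HopfAlgebroid A Γ} {K : HopfAlgebroid B Sg}

theorem canonicalMap_eq_lift (φ : HopfAlgebroidMap H K) :
    canonicalMap φ = BGammaB.lift K.ηL φ.f₁ K.ηR φ.ηL_comm φ.ηR_comm :=
  rfl

theorem comp_canonicalMap_eq_lift_iff (φ : HopfAlgebroidMap H K) {R : Type*} [CommRing R]
    (α : Sg →+* R) {x y : B →+* R} {β : Γ →+* R}
    (hL : β.comp H.ηL = x.comp φ.f₀) (hR : β.comp H.ηR = y.comp φ.f₀) :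
    α.comp (canonicalMap φ) = BGammaB.lift x β y hL hR ↔
      α.comp K.ηL = x ∧ α.comp K.ηR = y ∧ α.comp φ.f₁ = β := by
  rw [canonicalMap_eq_lift, BGammaB.comp_lift, BGammaB.lift_inj]
  tauto

end CanonicalMap

theorem hopf_map_full_iff_canonical_split_mono
    {A Γ B Sg : Type u} [CommRing A] [CommRing Γ] [CommRing B] [CommRing Sg]
    {H : HopfAlgebroid A Γ} {K : HopfAlgebroid B Sg} (φ : HopfAlgebroidMap H K) :
    (∀ (R : Type u) [CommRing R] (x y : B →+* R) (β : Γ →+* R),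
        β.comp H.ηL = x.comp φ.f₀ → β.comp H.ηR = y.comp φ.f₀ →
        ∃ α : Sg →+* R, α.comp K.ηL = x ∧ α.comp K.ηR = y ∧ α.comp φ.f₁ = β) ↔
    (∃ r : Sg →+* BGammaB H φ.f₀,
        r.comp (canonicalMap φ) = RingHom.id (BGammaB H φ.f₀)) := by
  rw [RingHom.exists_comp_eq_id_iff_forall_exists_comp_eq]
  constructor
  · intro hfull R _ g
    obtain ⟨α, hα⟩ := hfull R _ _ _
      (BGammaB.comp_incl₂_comp_ηL g) (BGammaB.comp_incl₂_comp_ηR g)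
    exact ⟨α, ((comp_canonicalMap_eq_lift_iff φ α _ _).2 hα).trans (BGammaB.lift_comp_incl g)⟩
  · intro hext R _ x y β hL hR
    obtain ⟨α, hα⟩ := hext R (BGammaB.lift x β y hL hR)
    exact ⟨α, (comp_canonicalMap_eq_lift_iff φ α hL hR).1 hα⟩
end

section
/- Let f = (f₀, f₁) : (A, Γ) → (B, Σ) be a map of commutative Hopf algebroids. Then f* : (Spec B, Spec Σ) → (Spec A, Spec Γ) is fully faithful (i.e., f*(R) is fully faithful for every commutative ring R) if and only if the canonical ring map B ⊗_A Γ ⊗_A B → Σ, b ⊗ γ ⊗ b' ↦ η_L(b)·f₁(γ)·η_R(b'), is an isomorphism. -/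
set_option maxHeartbeats 1000000

universe u

open TensorProduct

/-!
Ring maps `B ⊗[A] Γ ⊗[A] B → R` are the same as triples `(x, β, y)` with `β : x f₀ → y f₀` a
morphism of `(Spec A, Spec Γ)(R)`, and the canonical map corresponds to the triple `(ηL, f₁, ηR)`.
Faithfulness and fullness of `f*(R)` therefore say exactly that precomposition with the canonical
map is injective, resp. surjective, on ring maps into `R`; by Yoneda this holds for all `R` iff
the canonical map is an isomorphism.
-/

theorem RingHom.bijective_iff_forall_bijective_comp {P Q : Type u} [CommRing P] [CommRing Q]
    (f : P →+* Q) :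
    Function.Bijective f ↔
      ∀ (R : Type u) [CommRing R], Function.Bijective fun α : Q →+* R => α.comp f := by
  constructor
  · intro hf R _
    let e := RingEquiv.ofBijective f hf
    refine Function.bijective_iff_has_inverse.mpr ⟨fun β => β.comp e.symm.toRingHom, ?_, ?_⟩
    · intro α
      ext q
      exact congrArg α (e.apply_symm_apply q)
    · intro β
      ext p
      exact congrArg β (e.symm_apply_apply p)
  · intro h
    obtain ⟨g, hg⟩ := (h P).2 (RingHom.id P)
    have hfg : f.comp g = RingHom.id Q :=
      (h Q).1 (by simp only [RingHom.comp_assoc, hg, RingHom.comp_id, RingHom.id_comp])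
    exact Function.bijective_iff_has_inverse.mpr
      ⟨g, RingHom.congr_fun hg, RingHom.congr_fun hfg⟩

section Lift

variable {A Γ B R : Type u} [CommRing A] [CommRing Γ] [CommRing B] [CommRing R]
variable (H : HopfAlgebroid A Γ) (f₀ : A →+* B)

noncomputable def GammaB.lift_s13 (β : Γ →+* R) (y : B →+* R) (hβ : β.comp H.ηR = y.comp f₀) :
    GammaB H f₀ →+* R :=
  letI := f₀.toAlgebra
  letI := H.ηR.toAlgebra
  letI : Algebra A R := (β.comp H.ηR).toAlgebra
  (Algebra.TensorProduct.productMap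
    (⟨β, fun _ => rfl⟩ : Γ →ₐ[A] R)
    (⟨y, fun a => (RingHom.congr_fun hβ a).symm⟩ : B →ₐ[A] R)).toRingHom

theorem GammaB.lift_comp_inclGamma_s13 (β : Γ →+* R) (y : B →+* R)
    (hβ : β.comp H.ηR = y.comp f₀) :
    (GammaB.lift_s13 H f₀ β y hβ).comp (inclGamma H f₀) = β := by
  let _ := f₀.toAlgebra
  let _ := H.ηR.toAlgebra
  let _ : Algebra A R := (β.comp H.ηR).toAlgebra
  ext γ
  exact Algebra.TensorProduct.productMap_left_apply _ _ γ

theorem GammaB.lift_comp_inclB_s13 (β : Γ →+* R) (y : B →+* R)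
    (hβ : β.comp H.ηR = y.comp f₀) :
    (GammaB.lift_s13 H f₀ β y hβ).comp (inclB H f₀) = y := by
  let _ := f₀.toAlgebra
  let _ := H.ηR.toAlgebra
  let _ : Algebra A R := (β.comp H.ηR).toAlgebra
  ext b
  exact Algebra.TensorProduct.productMap_right_apply _ _ b

theorem GammaB.hom_ext {ψ ψ' : GammaB H f₀ →+* R}
    (hΓ : ψ.comp (inclGamma H f₀) = ψ'.comp (inclGamma H f₀))
    (hB : ψ.comp (inclB H f₀) = ψ'.comp (inclB H f₀)) : ψ = ψ' :=
  let _ := f₀.toAlgebra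
  let _ := H.ηR.toAlgebra
  Algebra.TensorProduct.ringHom_ext hΓ hB

noncomputable def BGammaB.lift_s13 (x : B →+* R) (β : Γ →+* R) (y : B →+* R)
    (hL : β.comp H.ηL = x.comp f₀) (hR : β.comp H.ηR = y.comp f₀) : BGammaB H f₀ →+* R :=
  letI := f₀.toAlgebra
  letI := ((inclGamma H f₀).comp H.ηL).toAlgebra
  letI : Algebra A R := (x.comp f₀).toAlgebra
  (Algebra.TensorProduct.productMap
    (⟨x, fun _ => rfl⟩ : B →ₐ[A] R)
    (⟨GammaB.lift_s13 H f₀ β y hR, fun a => by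
      show GammaB.lift_s13 H f₀ β y hR (inclGamma H f₀ (H.ηL a)) = x (f₀ a)
      rw [← RingHom.comp_apply, GammaB.lift_comp_inclGamma_s13]
      exact RingHom.congr_fun hL a⟩ : GammaB H f₀ →ₐ[A] R)).toRingHom

variable (x : B →+* R) (β : Γ →+* R) (y : B →+* R)
  (hL : β.comp H.ηL = x.comp f₀) (hR : β.comp H.ηR = y.comp f₀)

theorem BGammaB.lift_comp_incl₁_s13 : (BGammaB.lift_s13 H f₀ x β y hL hR).comp (incl₁ H f₀) = x := by
  let _ := f₀.toAlgebra
  let _ := ((inclGamma H f₀).comp H.ηL).toAlgebra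
  let _ : Algebra A R := (x.comp f₀).toAlgebra
  ext b
  exact Algebra.TensorProduct.productMap_left_apply _ _ b

theorem BGammaB.lift_comp_incl₂_s13 : (BGammaB.lift_s13 H f₀ x β y hL hR).comp (incl₂ H f₀) = β := by
  let _ := f₀.toAlgebra
  let _ := ((inclGamma H f₀).comp H.ηL).toAlgebra
  let _ : Algebra A R := (x.comp f₀).toAlgebra
  ext γ
  exact (Algebra.TensorProduct.productMap_right_apply _ _ _).trans
    (RingHom.congr_fun (GammaB.lift_comp_inclGamma_s13 H f₀ β y hR) γ)

theorem BGammaB.lift_comp_incl₃_s13 : (BGammaB.lift_s13 H f₀ x β y hL hR).comp (incl₃ H f₀) = y := by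
  let _ := f₀.toAlgebra
  let _ := ((inclGamma H f₀).comp H.ηL).toAlgebra
  let _ : Algebra A R := (x.comp f₀).toAlgebra
  ext b
  exact (Algebra.TensorProduct.productMap_right_apply _ _ _).trans
    (RingHom.congr_fun (GammaB.lift_comp_inclB_s13 H f₀ β y hR) b)

theorem BGammaB.hom_ext {ψ ψ' : BGammaB H f₀ →+* R}
    (h₁ : ψ.comp (incl₁ H f₀) = ψ'.comp (incl₁ H f₀))
    (h₂ : ψ.comp (incl₂ H f₀) = ψ'.comp (incl₂ H f₀))
    (h₃ : ψ.comp (incl₃ H f₀) = ψ'.comp (incl₃ H f₀)) : ψ = ψ' :=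
  let _ := f₀.toAlgebra
  let _ := ((inclGamma H f₀).comp H.ηL).toAlgebra
  Algebra.TensorProduct.ringHom_ext h₁ (GammaB.hom_ext H f₀ h₂ h₃)

theorem incl₂_comp_ηL : (incl₂ H f₀).comp H.ηL = (incl₁ H f₀).comp f₀ := by
  let _ := f₀.toAlgebra
  let _ := H.ηR.toAlgebra
  let _ := ((inclGamma H f₀).comp H.ηL).toAlgebra
  ext a
  exact (Algebra.TensorProduct.algebraMap_apply' (A := B) (B := GammaB H f₀) a).symm.trans
    (Algebra.TensorProduct.algebraMap_apply a)

theorem inclGamma_comp_ηR : (inclGamma H f₀).comp H.ηR = (inclB H f₀).comp f₀ := by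
  let _ := f₀.toAlgebra
  let _ := H.ηR.toAlgebra
  ext a
  exact (Algebra.TensorProduct.algebraMap_apply (A := Γ) (B := B) a).symm.trans
    (Algebra.TensorProduct.algebraMap_apply' a)

theorem incl₂_comp_ηR : (incl₂ H f₀).comp H.ηR = (incl₃ H f₀).comp f₀ := by
  let _ := f₀.toAlgebra
  let _ := ((inclGamma H f₀).comp H.ηL).toAlgebra
  ext a
  exact congrArg (Algebra.TensorProduct.includeRight (R := A) (A := B))
    (RingHom.congr_fun (inclGamma_comp_ηR H f₀) a)

end Lift

namespace HopfAlgebroidMap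

variable {A Γ B Sg R : Type u} [CommRing A] [CommRing Γ] [CommRing B] [CommRing Sg] [CommRing R]
variable {H : HopfAlgebroid A Γ} {K : HopfAlgebroid B Sg} (φ : HopfAlgebroidMap H K)

theorem canonicalMap_comp_incl₁ : (canonicalMap φ).comp (incl₁ H φ.f₀) = K.ηL :=
  BGammaB.lift_comp_incl₁_s13 H φ.f₀ K.ηL φ.f₁ K.ηR φ.ηL_comm φ.ηR_comm

theorem canonicalMap_comp_incl₂ : (canonicalMap φ).comp (incl₂ H φ.f₀) = φ.f₁ :=
  BGammaB.lift_comp_incl₂_s13 H φ.f₀ K.ηL φ.f₁ K.ηR φ.ηL_comm φ.ηR_comm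

theorem canonicalMap_comp_incl₃ : (canonicalMap φ).comp (incl₃ H φ.f₀) = K.ηR :=
  BGammaB.lift_comp_incl₃_s13 H φ.f₀ K.ηL φ.f₁ K.ηR φ.ηL_comm φ.ηR_comm

theorem comp_canonicalMap_eq_iff (α : Sg →+* R) (ψ : BGammaB H φ.f₀ →+* R) :
    α.comp (canonicalMap φ) = ψ ↔
      α.comp K.ηL = ψ.comp (incl₁ H φ.f₀) ∧ α.comp K.ηR = ψ.comp (incl₃ H φ.f₀) ∧
        α.comp φ.f₁ = ψ.comp (incl₂ H φ.f₀) := by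
  simp only [← canonicalMap_comp_incl₁ φ, ← canonicalMap_comp_incl₂ φ,
    ← canonicalMap_comp_incl₃ φ, ← RingHom.comp_assoc]
  constructor
  · rintro rfl
    exact ⟨rfl, rfl, rfl⟩
  · rintro ⟨h₁, h₃, h₂⟩
    exact BGammaB.hom_ext H φ.f₀ h₁ h₂ h₃

theorem comp_canonicalMap_inj {α β : Sg →+* R} :
    α.comp (canonicalMap φ) = β.comp (canonicalMap φ) ↔
      α.comp K.ηL = β.comp K.ηL ∧ α.comp K.ηR = β.comp K.ηR ∧ α.comp φ.f₁ = β.comp φ.f₁ := by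
  rw [comp_canonicalMap_eq_iff, RingHom.comp_assoc, RingHom.comp_assoc, RingHom.comp_assoc,
    canonicalMap_comp_incl₁, canonicalMap_comp_incl₂, canonicalMap_comp_incl₃]

theorem faithful_iff_injective_comp_canonicalMap :
    (∀ (R : Type u) [CommRing R] (α β : Sg →+* R),
        α.comp K.ηL = β.comp K.ηL → α.comp K.ηR = β.comp K.ηR →
        α.comp φ.f₁ = β.comp φ.f₁ → α = β) ↔
      ∀ (R : Type u) [CommRing R],
        Function.Injective fun α : Sg →+* R => α.comp (canonicalMap φ) := by
  simp only [Function.Injective, comp_canonicalMap_inj, and_imp]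

theorem full_iff_surjective_comp_canonicalMap :
    (∀ (R : Type u) [CommRing R] (x y : B →+* R) (β : Γ →+* R),
        β.comp H.ηL = x.comp φ.f₀ → β.comp H.ηR = y.comp φ.f₀ →
        ∃ α : Sg →+* R, α.comp K.ηL = x ∧ α.comp K.ηR = y ∧ α.comp φ.f₁ = β) ↔
      ∀ (R : Type u) [CommRing R],
        Function.Surjective fun α : Sg →+* R => α.comp (canonicalMap φ) := by
  refine forall_congr' fun R => forall_congr' fun _ =>
    ⟨fun full ψ => ?_, fun surj x y β hL hR => ?_⟩
  · obtain ⟨α, hα⟩ := full (ψ.comp (incl₁ H φ.f₀)) (ψ.comp (incl₃ H φ.f₀))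
      (ψ.comp (incl₂ H φ.f₀)) (by rw [RingHom.comp_assoc, incl₂_comp_ηL, RingHom.comp_assoc])
      (by rw [RingHom.comp_assoc, incl₂_comp_ηR, RingHom.comp_assoc])
    exact ⟨α, (comp_canonicalMap_eq_iff φ α ψ).2 hα⟩
  · obtain ⟨α, hα⟩ := surj (BGammaB.lift_s13 H φ.f₀ x β y hL hR)
    refine ⟨α, ?_⟩
    rwa [comp_canonicalMap_eq_iff, BGammaB.lift_comp_incl₁_s13, BGammaB.lift_comp_incl₂_s13,
      BGammaB.lift_comp_incl₃_s13] at hα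

end HopfAlgebroidMap

theorem hopf_map_fully_faithful_iff_canonical_iso
    {A Γ B Sg : Type u} [CommRing A] [CommRing Γ] [CommRing B] [CommRing Sg]
    {H : HopfAlgebroid A Γ} {K : HopfAlgebroid B Sg} (φ : HopfAlgebroidMap H K) :
    ((∀ (R : Type u) [CommRing R] (α β : Sg →+* R),
        α.comp K.ηL = β.comp K.ηL → α.comp K.ηR = β.comp K.ηR →
        α.comp φ.f₁ = β.comp φ.f₁ → α = β) ∧
     (∀ (R : Type u) [CommRing R] (x y : B →+* R) (β : Γ →+* R),
        β.comp H.ηL = x.comp φ.f₀ → β.comp H.ηR = y.comp φ.f₀ →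
        ∃ α : Sg →+* R, α.comp K.ηL = x ∧ α.comp K.ηR = y ∧ α.comp φ.f₁ = β)) ↔
    Function.Bijective (canonicalMap φ) := by
  rw [φ.faithful_iff_injective_comp_canonicalMap, φ.full_iff_surjective_comp_canonicalMap,
    RingHom.bijective_iff_forall_bijective_comp]
  simp only [Function.Bijective, forall_and]
end

section
/- Let f = (f₀, f₁) : (A, Γ) → (B, Σ) be a map of commutative Hopf algebroids. The sheaf-theoretic essential image (in the fpqc topology) of f* : (Spec B, Spec Σ) → (Spec A, Spec Γ) is all of Spec A if and only if there exists a commutative ring C and a ring map g : B ⊗_A Γ → C such that the composite of g with the map A → B ⊗_A Γ sending a to 1 ⊗ η_R(a) makes C a faithfully flat A-algebra. -/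
set_option maxHeartbeats 1000000

universe u

open TensorProduct

section BGammaSection

variable {A Γ B : Type u} [CommRing A] [CommRing Γ] [CommRing B]

/-- The tensor product `B ⊗[A] Γ`, where `B` is an `A`-algebra via `f₀` and `Γ` via `ηL`. -/
def BGamma (H : HopfAlgebroid A Γ) (f₀ : A →+* B) : Type u :=
  letI := f₀.toAlgebra
  letI := H.ηL.toAlgebra
  B ⊗[A] Γ

noncomputable instance (H : HopfAlgebroid A Γ) (f₀ : A →+* B) : CommRing (BGamma H f₀) :=
  letI := f₀.toAlgebra
  letI := H.ηL.toAlgebra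
  (inferInstance : CommRing (B ⊗[A] Γ))

/-- The inclusion `Γ → B ⊗[A] Γ` of the right tensor factor. -/
noncomputable def inclGammaRight (H : HopfAlgebroid A Γ) (f₀ : A →+* B) : Γ →+* BGamma H f₀ :=
  letI := f₀.toAlgebra
  letI := H.ηL.toAlgebra
  (Algebra.TensorProduct.includeRight : Γ →ₐ[A] B ⊗[A] Γ).toRingHom

/-- The map `f₀ ⊗ ηR : A → B ⊗[A] Γ`, `a ↦ 1 ⊗ ηR(a)`. -/
noncomputable def unitBGamma (H : HopfAlgebroid A Γ) (f₀ : A →+* B) : A →+* BGamma H f₀ :=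
  (inclGammaRight H f₀).comp H.ηR

end BGammaSection

/-- The sheaf-theoretic essential image, in the fpqc topology, of
`f* : (Spec B, Spec Σ) → (Spec A, Spec Γ)` is all of `Spec A`: every point `y : A →+* R`
admits a finite family `{R → S i}` of flat maps whose product is faithfully flat over `R`
such that each restriction of `y` is isomorphic, in the groupoid `(Spec A, Spec Γ)(S i)`,
to a point in the image of `f*` (i.e. of the form `x ∘ f₀` for some `x : B →+* S i`). -/
def FpqcEssentiallySurjective {A Γ B Sg : Type u} [CommRing A] [CommRing Γ] [CommRing B]
    [CommRing Sg] {H : HopfAlgebroid A Γ} {K : HopfAlgebroid B Sg}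
    (φ : HopfAlgebroidMap H K) : Prop :=
  ∀ (R : Type u) [CommRing R] (y : A →+* R),
    ∃ (ι : Type u) (_ : Fintype ι) (S : ι → CommRingCat.{u}) (f : ∀ i, R →+* S i),
      (∀ i, @Module.Flat R (S i) _ _ ((f i).toAlgebra.toModule)) ∧
      (@Module.FaithfullyFlat R (∀ i, S i) _ _ ((Pi.ringHom f).toAlgebra.toModule)) ∧
      (∀ i, ∃ (x : B →+* S i) (α : Γ →+* S i),
        α.comp H.ηL = x.comp φ.f₀ ∧ α.comp H.ηR = (f i).comp y)


section AuxLemmas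

universe v

open TensorProduct in
/-- Faithful flatness is stable under base change (stated with explicit ring homs). -/
lemma ff_baseChange {A R C : Type u} [CommRing A] [CommRing R] [CommRing C]
    (y : A →+* R) (c : A →+* C)
    (hc : @Module.FaithfullyFlat A C _ _ c.toAlgebra.toModule) :
    letI := y.toAlgebra
    letI := c.toAlgebra
    @Module.FaithfullyFlat R (R ⊗[A] C) _ _
      ((Algebra.TensorProduct.includeLeftRingHom : R →+* R ⊗[A] C).toAlgebra.toModule) := by
  letI := y.toAlgebra
  letI := c.toAlgebra
  haveI := hc
  have halg : (Algebra.TensorProduct.includeLeftRingHom : R →+* R ⊗[A] C).toAlgebra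
      = Algebra.TensorProduct.leftAlgebra := Algebra.algebra_ext _ _ fun r => rfl
  rw [halg]
  rw [Module.FaithfullyFlat.iff_flat_and_rTensor_faithful]
  refine ⟨inferInstance, fun N _ _ hN => ?_⟩
  letI : Module A N := Module.compHom N y
  haveI : IsScalarTower A R N := ⟨fun a r n => mul_smul (y a) r n⟩
  haveI := hN
  haveI : Nontrivial (N ⊗[A] C) := Module.FaithfullyFlat.rTensor_nontrivial A C N
  exact (TensorProduct.AlgebraTensorModule.cancelBaseChange A R R N C).toEquiv.nontrivial

/-- Faithful flatness transfers from `T` to the one-index product `PUnit → T`. -/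
lemma ff_piUnique {R T : Type u} [CommRing R] [CommRing T] (f : R →+* T)
    (h : @Module.FaithfullyFlat R T _ _ f.toAlgebra.toModule) :
    @Module.FaithfullyFlat R (PUnit.{u + 1} → T) _ _
      ((Pi.ringHom (fun _ : PUnit.{u + 1} => f)).toAlgebra.toModule) := by
  letI := f.toAlgebra
  letI := (Pi.ringHom (fun _ : PUnit.{u + 1} => f)).toAlgebra
  haveI := h
  exact Module.FaithfullyFlat.of_linearEquiv R T (N := PUnit.{u + 1} → T)
    { toFun := fun x => x PUnit.unit
      invFun := fun t _ => t
      left_inv := fun x => funext fun u => rfl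
      right_inv := fun t => rfl
      map_add' := fun x y => rfl
      map_smul' := fun r x => rfl }

open TensorProduct in
/-- In `R ⊗[A] C`, `algebraMap a ⊗ 1 = 1 ⊗ algebraMap a`. -/
lemma tmul_one_swap {A R C : Type u} [CommRing A] [CommRing R] [CommRing C]
    [Algebra A R] [Algebra A C] (a : A) :
    ((algebraMap A R a) ⊗ₜ[A] (1 : C) : R ⊗[A] C) = 1 ⊗ₜ[A] algebraMap A C a := by
  rw [Algebra.algebraMap_eq_smul_one, Algebra.algebraMap_eq_smul_one (A := C), smul_tmul]

open TensorProduct in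
/-- Existence of the extension `B ⊗[A] Γ → C` of a compatible pair `(x, α)`. -/
lemma exists_bgamma_hom {A Γ B : Type u} [CommRing A] [CommRing Γ] [CommRing B]
    (H : HopfAlgebroid A Γ) (f₀ : A →+* B) {C : Type u} [CommRing C]
    (x : B →+* C) (α : Γ →+* C) (hL : α.comp H.ηL = x.comp f₀) :
    ∃ g : BGamma H f₀ →+* C, g.comp (unitBGamma H f₀) = α.comp H.ηR := by
  letI := f₀.toAlgebra
  letI := H.ηL.toAlgebra
  letI : Algebra A C := (x.comp f₀).toAlgebra
  refine ⟨(Algebra.TensorProduct.productMap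
    (⟨x, fun _ => rfl⟩ : B →ₐ[A] C)
    (⟨α, fun a => RingHom.congr_fun hL a⟩ : Γ →ₐ[A] C)).toRingHom, ?_⟩
  ext a
  show Algebra.TensorProduct.productMap _ _ ((1 : B) ⊗ₜ[A] H.ηR a) = α (H.ηR a)
  simp [Algebra.TensorProduct.productMap_apply_tmul]

end AuxLemmas

/-!
STATEMENT 14: For a map of commutative Hopf algebroids `f = (f₀, f₁) : (A,Γ) → (B,Σ)`, the
sheaf-theoretic essential image (in the fpqc topology) of
`f* : (Spec B, Spec Σ) → (Spec A, Spec Γ)` is all of `Spec A` if and only if there exist a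
commutative ring `C` and a ring map `g : B ⊗[A] Γ → C` such that the composite
`g ∘ (f₀ ⊗ ηR) : A → C` (where `(f₀ ⊗ ηR)(a) = 1 ⊗ ηR(a)`) makes `C` a faithfully flat
`A`-algebra.
-/
theorem hopf_map_fpqc_essential_image_iff
    {A Γ B Sg : Type u} [CommRing A] [CommRing Γ] [CommRing B] [CommRing Sg]
    {H : HopfAlgebroid A Γ} {K : HopfAlgebroid B Sg} (φ : HopfAlgebroidMap H K) :
    FpqcEssentiallySurjective φ ↔
    ∃ (C : CommRingCat.{u}) (g : BGamma H φ.f₀ →+* C),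
      @Module.FaithfullyFlat A C _ _
        ((g.comp (unitBGamma H φ.f₀)).toAlgebra.toModule) := by
  constructor
  · -- forward direction
    intro h
    obtain ⟨ι, _, S, f, hflat, hff, hpts⟩ := h A (RingHom.id A)
    choose x α hL hR using hpts
    have hLpi : (Pi.ringHom α).comp H.ηL = (Pi.ringHom x).comp φ.f₀ :=
      RingHom.ext fun a => funext fun i => RingHom.congr_fun (hL i) a
    obtain ⟨g, hg⟩ := exists_bgamma_hom H φ.f₀ (Pi.ringHom x) (Pi.ringHom α) hLpi
    refine ⟨CommRingCat.of (∀ i, S i), g, ?_⟩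
    have heq : g.comp (unitBGamma H φ.f₀) = Pi.ringHom f := by
      rw [hg]
      exact RingHom.ext fun a => funext fun i => by
        exact RingHom.congr_fun (hR i) a
    rw [heq]
    exact hff
  · -- backward direction
    rintro ⟨C, g, hC⟩
    intro R _ y
    letI := φ.f₀.toAlgebra
    letI := H.ηL.toAlgebra
    letI := y.toAlgebra
    letI := (g.comp (unitBGamma H φ.f₀)).toAlgebra
    refine ⟨PUnit.{u + 1}, inferInstance,
      fun _ => CommRingCat.of (R ⊗[A] (C : Type u)),
      fun _ => Algebra.TensorProduct.includeLeftRingHom, ?_, ?_, ?_⟩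
    · intro i
      exact (ff_baseChange y (g.comp (unitBGamma H φ.f₀)) hC).toFlat
    · exact ff_piUnique _ (ff_baseChange y (g.comp (unitBGamma H φ.f₀)) hC)
    · intro i
      refine ⟨((Algebra.TensorProduct.includeRight :
          (C : Type u) →ₐ[A] R ⊗[A] (C : Type u)).toRingHom).comp
            (g.comp Algebra.TensorProduct.includeLeftRingHom),
        ((Algebra.TensorProduct.includeRight :
          (C : Type u) →ₐ[A] R ⊗[A] (C : Type u)).toRingHom).comp
            (g.comp (inclGammaRight H φ.f₀)), ?_, ?_⟩
      · ext a
        show (Algebra.TensorProduct.includeRight.toRingHom)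
            (g ((1 : B) ⊗ₜ[A] H.ηL a)) =
          (Algebra.TensorProduct.includeRight.toRingHom)
            (g (φ.f₀ a ⊗ₜ[A] (1 : Γ)))
        congr 1
        exact congrArg g (tmul_one_swap (R := B) (C := Γ) a).symm
      · ext a
        show (1 : R) ⊗ₜ[A] (g.comp (unitBGamma H φ.f₀)) a = y a ⊗ₜ[A] 1
        exact (tmul_one_swap (R := R) (C := (C : Type u)) a).symm
end

section
/- Let (A, Γ) be a commutative Hopf algebroid and f : A → B a ring homomorphism. Define Γ_f = B ⊗_A Γ ⊗_A B (with B an A-algebra via f, and Γ an A-bimodule via η_L and η_R), with structure maps: η_L(b) = b ⊗ 1 ⊗ 1, η_R(b) = 1 ⊗ 1 ⊗ b, counit (b ⊗ γ ⊗ b') ↦ b·f(ε(γ))·b', conjugation (b ⊗ γ ⊗ b') ↦ b' ⊗ c(γ) ⊗ b, and diagonal induced by Δ of Γ and insertion of the unit of B in the middle factor. Then (B, Γ_f) is a commutative Hopf algebroid, and (f, f₁) with f₁(γ) = 1 ⊗ γ ⊗ 1 is a map of Hopf algebroids (A, Γ) → (B, Γ_f) for which the canonical map B ⊗_A Γ ⊗_A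 B → Γ_f is an isomorphism. -/
set_option maxHeartbeats 1000000

universe u

open TensorProduct

/-!
STATEMENT 15: Let `(A, Γ)` be a commutative Hopf algebroid and `f : A → B` a ring map.  Define
`Γ_f = B ⊗[A] Γ ⊗[A] B` (with `B` an `A`-algebra via `f` and `Γ` an `A`-bimodule via `ηL` and
`ηR`).  Then `(B, Γ_f)` carries a Hopf algebroid structure with `ηL(b) = b ⊗ 1 ⊗ 1`,
`ηR(b) = 1 ⊗ 1 ⊗ b`, counit `b ⊗ γ ⊗ b' ↦ b·f(ε(γ))·b'`, conjugation
`b ⊗ γ ⊗ b' ↦ b' ⊗ c(γ) ⊗ b`, and composition (= diagonal) induced by that of `Γ`, and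
`(f, f₁)` with `f₁(γ) = 1 ⊗ γ ⊗ 1` is a map of Hopf algebroids `(A, Γ) → (B, Γ_f)` for which
the canonical map `B ⊗[A] Γ ⊗[A] B → Γ_f` is an isomorphism.

Here the counit and conjugation are characterized by their values on the three tensor-factor
inclusions `incl₁ : B → Γ_f`, `incl₂ : Γ → Γ_f`, `incl₃ : B → Γ_f` (which generate `Γ_f` as a
ring), and the composition `Hf.comp` (the functor-of-points form of the diagonal
`Δ(b ⊗ γ ⊗ b') = Σ (b ⊗ γ₁ ⊗ 1) ⊗_B (1 ⊗ γ₂ ⊗ b')`) is characterized by its restrictions to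
the three inclusions.
-/


namespace Ext15

variable {A Γ B : Type u} [CommRing A] [CommRing Γ] [CommRing B]
variable (H : HopfAlgebroid A Γ) (f : A →+* B)

noncomputable def mkStep {R : Type u} [CommRing R] (g : Γ →+* R) (v : B →+* R)
    (hr : g.comp H.ηR = v.comp f) : GammaB H f →+* R :=
  letI := f.toAlgebra
  letI := H.ηR.toAlgebra
  letI : Algebra A R := (g.comp H.ηR).toAlgebra
  (Algebra.TensorProduct.productMap
    (⟨g, fun _ => rfl⟩ : Γ →ₐ[A] R)
    (⟨v, fun a => (RingHom.congr_fun hr a).symm⟩ : B →ₐ[A] R)).toRingHom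

lemma mkStep_incl {R : Type u} [CommRing R] (g : Γ →+* R) (v : B →+* R)
    (hr : g.comp H.ηR = v.comp f) (x : Γ) :
    mkStep H f g v hr ((inclGamma H f) x) = g x := by
  letI := f.toAlgebra
  letI := H.ηR.toAlgebra
  letI : Algebra A R := (g.comp H.ηR).toAlgebra
  unfold mkStep inclGamma
  show (Algebra.TensorProduct.productMap _ _) (x ⊗ₜ[A] (1 : B)) = g x
  rw [Algebra.TensorProduct.productMap_left_apply]
  rfl

lemma mkStep_inclB {R : Type u} [CommRing R] (g : Γ →+* R) (v : B →+* R)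
    (hr : g.comp H.ηR = v.comp f) (b : B) :
    mkStep H f g v hr ((inclB H f) b) = v b := by
  letI := f.toAlgebra
  letI := H.ηR.toAlgebra
  letI : Algebra A R := (g.comp H.ηR).toAlgebra
  unfold mkStep inclB
  show (Algebra.TensorProduct.productMap _ _) ((1 : Γ) ⊗ₜ[A] b) = v b
  rw [Algebra.TensorProduct.productMap_right_apply]
  rfl

noncomputable def mk {R : Type u} [CommRing R] (u : B →+* R) (g : Γ →+* R) (v : B →+* R)
    (hl : g.comp H.ηL = u.comp f) (hr : g.comp H.ηR = v.comp f) : BGammaB H f →+* R :=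
  letI := f.toAlgebra
  letI := ((inclGamma H f).comp H.ηL).toAlgebra
  letI : Algebra A R := (u.comp f).toAlgebra
  (Algebra.TensorProduct.productMap
    (⟨u, fun _ => rfl⟩ : B →ₐ[A] R)
    (⟨mkStep H f g v hr, fun a => by
      show mkStep H f g v hr ((inclGamma H f) (H.ηL a)) = (u.comp f) a
      rw [mkStep_incl]
      exact RingHom.congr_fun hl a⟩ : GammaB H f →ₐ[A] R)).toRingHom

lemma mk_incl₁ {R : Type u} [CommRing R] (u : B →+* R) (g : Γ →+* R) (v : B →+* R)
    (hl : g.comp H.ηL = u.comp f) (hr : g.comp H.ηR = v.comp f) :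
    (mk H f u g v hl hr).comp (incl₁ H f) = u := by
  letI := f.toAlgebra
  letI := ((inclGamma H f).comp H.ηL).toAlgebra
  letI : Algebra A R := (u.comp f).toAlgebra
  ext b
  show mk H f u g v hl hr (b ⊗ₜ[A] (1 : GammaB H f)) = u b
  unfold mk
  show (Algebra.TensorProduct.productMap _ _) (b ⊗ₜ[A] (1 : GammaB H f)) = u b
  rw [Algebra.TensorProduct.productMap_left_apply]
  rfl

lemma mk_incl₂ {R : Type u} [CommRing R] (u : B →+* R) (g : Γ →+* R) (v : B →+* R)
    (hl : g.comp H.ηL = u.comp f) (hr : g.comp H.ηR = v.comp f) :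
    (mk H f u g v hl hr).comp (incl₂ H f) = g := by
  letI := f.toAlgebra
  letI := ((inclGamma H f).comp H.ηL).toAlgebra
  letI : Algebra A R := (u.comp f).toAlgebra
  ext x
  show mk H f u g v hl hr ((1 : B) ⊗ₜ[A] (inclGamma H f x)) = g x
  unfold mk
  show (Algebra.TensorProduct.productMap _ _) ((1 : B) ⊗ₜ[A] (inclGamma H f x)) = g x
  rw [Algebra.TensorProduct.productMap_right_apply]
  show mkStep H f g v hr ((inclGamma H f) x) = g x
  rw [mkStep_incl]

lemma mk_incl₃ {R : Type u} [CommRing R] (u : B →+* R) (g : Γ →+* R) (v : B →+* R)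
    (hl : g.comp H.ηL = u.comp f) (hr : g.comp H.ηR = v.comp f) :
    (mk H f u g v hl hr).comp (incl₃ H f) = v := by
  letI := f.toAlgebra
  letI := ((inclGamma H f).comp H.ηL).toAlgebra
  letI : Algebra A R := (u.comp f).toAlgebra
  ext b
  show mk H f u g v hl hr ((1 : B) ⊗ₜ[A] (inclB H f b)) = v b
  unfold mk
  show (Algebra.TensorProduct.productMap _ _) ((1 : B) ⊗ₜ[A] (inclB H f b)) = v b
  rw [Algebra.TensorProduct.productMap_right_apply]
  show mkStep H f g v hr ((inclB H f) b) = v b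
  rw [mkStep_inclB]


lemma incl₂_ηL : (incl₂ H f).comp H.ηL = (incl₁ H f).comp f := by
  letI := f.toAlgebra
  letI := ((inclGamma H f).comp H.ηL).toAlgebra
  ext a
  show (1 : B) ⊗ₜ[A] (inclGamma H f (H.ηL a)) = (f a) ⊗ₜ[A] (1 : GammaB H f)
  have h1 : f a = a • (1 : B) := by
    rw [Algebra.smul_def, mul_one]; rfl
  have h2 : inclGamma H f (H.ηL a) = a • (1 : GammaB H f) := by
    rw [Algebra.smul_def, mul_one]; rfl
  rw [h1, h2, TensorProduct.smul_tmul]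

lemma incl₂_ηR : (incl₂ H f).comp H.ηR = (incl₃ H f).comp f := by
  letI := f.toAlgebra
  letI := H.ηR.toAlgebra
  letI := ((inclGamma H f).comp H.ηL).toAlgebra
  ext a
  show (1 : B) ⊗ₜ[A] (inclGamma H f (H.ηR a)) = (1 : B) ⊗ₜ[A] (inclB H f (f a))
  congr 1
  show (H.ηR a) ⊗ₜ[A] (1 : B) = (1 : Γ) ⊗ₜ[A] (f a)
  have h1 : f a = a • (1 : B) := by rw [Algebra.smul_def, mul_one]; rfl
  have h2 : H.ηR a = a • (1 : Γ) := by rw [Algebra.smul_def, mul_one]; rfl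
  rw [h1, h2, TensorProduct.smul_tmul]

lemma hom_ext {R : Type u} [CommRing R] (ψ₁ ψ₂ : BGammaB H f →+* R)
    (h1 : ψ₁.comp (incl₁ H f) = ψ₂.comp (incl₁ H f))
    (h2 : ψ₁.comp (incl₂ H f) = ψ₂.comp (incl₂ H f))
    (h3 : ψ₁.comp (incl₃ H f) = ψ₂.comp (incl₃ H f)) : ψ₁ = ψ₂ := by
  letI := f.toAlgebra
  letI := H.ηR.toAlgebra
  letI := ((inclGamma H f).comp H.ηL).toAlgebra
  ext x
  show ψ₁ x = ψ₂ x
  have key : ∀ y : GammaB H f, ψ₁ ((1 : B) ⊗ₜ[A] y) = ψ₂ ((1 : B) ⊗ₜ[A] y) := by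
    intro y
    refine TensorProduct.induction_on y ?_ ?_ ?_
    · show ψ₁ ((1 : B) ⊗ₜ[A] (0 : GammaB H f)) = ψ₂ ((1 : B) ⊗ₜ[A] (0 : GammaB H f))
      erw [TensorProduct.tmul_zero]
      exact (map_zero ψ₁).trans (map_zero ψ₂).symm
    · intro γ b'
      have e1 : (γ ⊗ₜ[A] (1 : B) : GammaB H f) * (((1 : Γ) ⊗ₜ[A] b' : Γ ⊗[A] B) : GammaB H f) =
          (γ ⊗ₜ[A] b' : GammaB H f) := by
        rw [Algebra.TensorProduct.tmul_mul_tmul, mul_one, one_mul]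
      have key2 : (incl₂ H f γ) * (incl₃ H f b') =
          ((1 : B) ⊗ₜ[A] (γ ⊗ₜ[A] b' : GammaB H f) : BGammaB H f) := by
        show ((1 : B) ⊗ₜ[A] (γ ⊗ₜ[A] (1 : B) : GammaB H f) : BGammaB H f) *
          (((1 : B) ⊗ₜ[A] (((1 : Γ) ⊗ₜ[A] b' : Γ ⊗[A] B) : GammaB H f)) : BGammaB H f) =
          ((1 : B) ⊗ₜ[A] (γ ⊗ₜ[A] b' : GammaB H f) : BGammaB H f)
        erw [@Algebra.TensorProduct.tmul_mul_tmul A B (GammaB H f) _ _ _ _ _ _ Algebra.toModule, mul_one, e1]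
        rfl
      have e2 : ψ₁ ((incl₂ H f) γ) = ψ₂ ((incl₂ H f) γ) := RingHom.congr_fun h2 γ
      have e3 : ψ₁ ((incl₃ H f) b') = ψ₂ ((incl₃ H f) b') := RingHom.congr_fun h3 b'
      rw [← key2, map_mul, map_mul, e2, e3]
    · intro p q hp hq
      erw [TensorProduct.tmul_add, map_add, map_add, hp, hq]
  refine TensorProduct.induction_on x ?_ ?_ ?_
  · exact (map_zero ψ₁).trans (map_zero ψ₂).symm
  · intro b y
    have hby : (b ⊗ₜ[A] (1 : GammaB H f)) * ((1 : B) ⊗ₜ[A] y) =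
        (b ⊗ₜ[A] y : B ⊗[A] GammaB H f) := by
      erw [@Algebra.TensorProduct.tmul_mul_tmul A B (GammaB H f) _ _ _ _ _ _ Algebra.toModule, mul_one, one_mul]
      rfl
    have e1 : ψ₁ (b ⊗ₜ[A] (1 : GammaB H f)) = ψ₂ (b ⊗ₜ[A] (1 : GammaB H f)) :=
      RingHom.congr_fun h1 b
    erw [← hby, map_mul, map_mul, e1, key y]
  · intro p q hp hq
    erw [map_add, map_add, hp, hq]

lemma comp_congr {R : Type u} [CommRing R] {α α' β β' : Γ →+* R} (ha : α = α') (hb : β = β')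
    (h : α.comp H.ηR = β.comp H.ηL) (h' : α'.comp H.ηR = β'.comp H.ηL) :
    H.comp α β h = H.comp α' β' h' := by
  subst ha; subst hb; rfl


noncomputable def εf : BGammaB H f →+* B :=
  mk H f (RingHom.id B) (f.comp H.ε) (RingHom.id B)
    (by ext a; exact congrArg f (RingHom.congr_fun H.ε_ηL a))
    (by ext a; exact congrArg f (RingHom.congr_fun H.ε_ηR a))

lemma εf_incl₁ : (εf H f).comp (incl₁ H f) = RingHom.id B := mk_incl₁ H f _ _ _ _ _
lemma εf_incl₂ : (εf H f).comp (incl₂ H f) = f.comp H.ε := mk_incl₂ H f _ _ _ _ _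
lemma εf_incl₃ : (εf H f).comp (incl₃ H f) = RingHom.id B := mk_incl₃ H f _ _ _ _ _

noncomputable def cf : BGammaB H f →+* BGammaB H f :=
  mk H f (incl₃ H f) ((incl₂ H f).comp H.c) (incl₁ H f)
    (by rw [RingHom.comp_assoc, H.c_ηL]; exact incl₂_ηR H f)
    (by rw [RingHom.comp_assoc, H.c_ηR]; exact incl₂_ηL H f)

lemma cf_incl₁ : (cf H f).comp (incl₁ H f) = incl₃ H f := mk_incl₁ H f _ _ _ _ _
lemma cf_incl₂ : (cf H f).comp (incl₂ H f) = (incl₂ H f).comp H.c := mk_incl₂ H f _ _ _ _ _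
lemma cf_incl₃ : (cf H f).comp (incl₃ H f) = incl₁ H f := mk_incl₃ H f _ _ _ _ _

lemma compf_aux {R : Type u} [CommRing R] (α β : BGammaB H f →+* R)
    (h : α.comp (incl₃ H f) = β.comp (incl₁ H f)) :
    (α.comp (incl₂ H f)).comp H.ηR = (β.comp (incl₂ H f)).comp H.ηL := by
  rw [RingHom.comp_assoc, incl₂_ηR, ← RingHom.comp_assoc, h, RingHom.comp_assoc,
    ← incl₂_ηL, ← RingHom.comp_assoc]

noncomputable def compf {R : Type u} [CommRing R] (α β : BGammaB H f →+* R)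
    (h : α.comp (incl₃ H f) = β.comp (incl₁ H f)) : BGammaB H f →+* R :=
  mk H f (α.comp (incl₁ H f))
    (H.comp (α.comp (incl₂ H f)) (β.comp (incl₂ H f)) (compf_aux H f α β h))
    (β.comp (incl₃ H f))
    (by rw [H.comp_ηL, RingHom.comp_assoc, incl₂_ηL, ← RingHom.comp_assoc])
    (by rw [H.comp_ηR, RingHom.comp_assoc, incl₂_ηR, ← RingHom.comp_assoc])

lemma compf_incl₁ {R : Type u} [CommRing R] (α β : BGammaB H f →+* R)
    (h : α.comp (incl₃ H f) = β.comp (incl₁ H f)) :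
    (compf H f α β h).comp (incl₁ H f) = α.comp (incl₁ H f) := mk_incl₁ H f _ _ _ _ _

lemma compf_incl₂ {R : Type u} [CommRing R] (α β : BGammaB H f →+* R)
    (h : α.comp (incl₃ H f) = β.comp (incl₁ H f)) :
    (compf H f α β h).comp (incl₂ H f) =
      H.comp (α.comp (incl₂ H f)) (β.comp (incl₂ H f)) (compf_aux H f α β h) :=
  mk_incl₂ H f _ _ _ _ _

lemma compf_incl₃ {R : Type u} [CommRing R] (α β : BGammaB H f →+* R)
    (h : α.comp (incl₃ H f) = β.comp (incl₁ H f)) :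
    (compf H f α β h).comp (incl₃ H f) = β.comp (incl₃ H f) := mk_incl₃ H f _ _ _ _ _

lemma eL {R : Type u} [CommRing R] (α : BGammaB H f →+* R) :
    ((α.comp (incl₁ H f)).comp (εf H f)).comp (incl₂ H f) =
      ((α.comp (incl₂ H f)).comp H.ηL).comp H.ε := by
  ext γ
  show α (incl₁ H f (εf H f (incl₂ H f γ))) = α (incl₂ H f (H.ηL (H.ε γ)))
  have e : εf H f (incl₂ H f γ) = f (H.ε γ) := RingHom.congr_fun (εf_incl₂ H f) γ
  have e2 : incl₁ H f (f (H.ε γ)) = incl₂ H f (H.ηL (H.ε γ)) :=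
    (RingHom.congr_fun (incl₂_ηL H f) (H.ε γ)).symm
  rw [e, e2]

lemma eR {R : Type u} [CommRing R] (α : BGammaB H f →+* R) :
    ((α.comp (incl₃ H f)).comp (εf H f)).comp (incl₂ H f) =
      ((α.comp (incl₂ H f)).comp H.ηR).comp H.ε := by
  ext γ
  show α (incl₃ H f (εf H f (incl₂ H f γ))) = α (incl₂ H f (H.ηR (H.ε γ)))
  have e : εf H f (incl₂ H f γ) = f (H.ε γ) := RingHom.congr_fun (εf_incl₂ H f) γ
  have e2 : incl₃ H f (f (H.ε γ)) = incl₂ H f (H.ηR (H.ε γ)) :=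
    (RingHom.congr_fun (incl₂_ηR H f) (H.ε γ)).symm
  rw [e, e2]

noncomputable def Hf : HopfAlgebroid B (BGammaB H f) where
  ηL := incl₁ H f
  ηR := incl₃ H f
  ε := εf H f
  c := cf H f
  comp := fun α β h => compf H f α β h
  ε_ηL := εf_incl₁ H f
  ε_ηR := εf_incl₃ H f
  c_ηL := cf_incl₁ H f
  c_ηR := cf_incl₃ H f
  c_c := by
    apply hom_ext H f
    · rw [RingHom.comp_assoc (incl₁ H f) (cf H f) (cf H f), cf_incl₁, cf_incl₃,
        RingHom.id_comp]
    · rw [RingHom.comp_assoc (incl₂ H f) (cf H f) (cf H f), cf_incl₂,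
        ← RingHom.comp_assoc H.c (incl₂ H f) (cf H f), cf_incl₂,
        RingHom.comp_assoc H.c H.c (incl₂ H f), H.c_c, RingHom.comp_id, RingHom.id_comp]
    · rw [RingHom.comp_assoc (incl₃ H f) (cf H f) (cf H f), cf_incl₃, cf_incl₁,
        RingHom.id_comp]
  comp_ηL := fun α β h => compf_incl₁ H f α β h
  comp_ηR := fun α β h => compf_incl₃ H f α β h
  comp_natural := by
    intro R S _ _ g α β h h'
    apply hom_ext H f
    · rw [RingHom.comp_assoc (incl₁ H f) (compf H f α β h) g, compf_incl₁, compf_incl₁,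
        ← RingHom.comp_assoc (incl₁ H f) α g]
    · have hgab : ((g.comp α).comp (incl₂ H f)).comp H.ηR =
          ((g.comp β).comp (incl₂ H f)).comp H.ηL := by
        rw [RingHom.comp_assoc (incl₂ H f) α g, RingHom.comp_assoc (incl₂ H f) β g]
        exact compf_aux H f (g.comp α) (g.comp β) h'
      rw [RingHom.comp_assoc (incl₂ H f) (compf H f α β h) g, compf_incl₂, compf_incl₂,
        H.comp_natural g (α.comp (incl₂ H f)) (β.comp (incl₂ H f)) (compf_aux H f α β h)
          (by rw [← RingHom.comp_assoc (incl₂ H f) α g, ← RingHom.comp_assoc (incl₂ H f) β g]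
              exact hgab)]
      exact comp_congr H (RingHom.comp_assoc (incl₂ H f) α g).symm
        (RingHom.comp_assoc (incl₂ H f) β g).symm _ _
    · rw [RingHom.comp_assoc (incl₃ H f) (compf H f α β h) g, compf_incl₃, compf_incl₃,
        ← RingHom.comp_assoc (incl₃ H f) β g]
  id_comp := by
    intro R _ α h
    apply hom_ext H f
    · rw [compf_incl₁, RingHom.comp_assoc (incl₁ H f) (εf H f) (α.comp (incl₁ H f)),
        εf_incl₁, RingHom.comp_id]
    · rw [compf_incl₂]
      have e := eL H f α
      rw [comp_congr H e rfl _ (by rw [← e]; exact compf_aux H f ((α.comp (incl₁ H f)).comp (εf H f)) α h)]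
      exact H.id_comp (α.comp (incl₂ H f)) (by
        rw [RingHom.comp_assoc H.ηR H.ε (((α.comp (incl₂ H f)).comp H.ηL)), H.ε_ηR,
          RingHom.comp_id])
    · exact compf_incl₃ H f _ α h
  comp_id := by
    intro R _ α h
    apply hom_ext H f
    · exact compf_incl₁ H f α _ h
    · rw [compf_incl₂]
      have e := eR H f α
      rw [comp_congr H rfl e _ (by rw [← e]; exact compf_aux H f α ((α.comp (incl₃ H f)).comp (εf H f)) h)]
      exact H.comp_id (α.comp (incl₂ H f)) (by
        rw [RingHom.comp_assoc H.ηL H.ε (((α.comp (incl₂ H f)).comp H.ηR)), H.ε_ηL,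
          RingHom.comp_id])
    · rw [compf_incl₃, RingHom.comp_assoc (incl₃ H f) (εf H f) (α.comp (incl₃ H f)),
        εf_incl₃, RingHom.comp_id]
  comp_assoc := by
    intro R _ α β γ h1 h2 h3 h4
    apply hom_ext H f
    · rw [compf_incl₁, compf_incl₁, compf_incl₁]
    · have hA := compf_aux H f α β h1
      have hC := compf_aux H f β γ h3
      have hB : (H.comp (α.comp (incl₂ H f)) (β.comp (incl₂ H f)) hA).comp H.ηR =
          (γ.comp (incl₂ H f)).comp H.ηL := by rw [H.comp_ηR]; exact hC
      have hD : (α.comp (incl₂ H f)).comp H.ηR =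
          (H.comp (β.comp (incl₂ H f)) (γ.comp (incl₂ H f)) hC).comp H.ηL := by
        rw [H.comp_ηL]; exact hA
      rw [compf_incl₂ H f (compf H f α β h1) γ h2]
      rw [comp_congr H (compf_incl₂ H f α β h1) rfl (compf_aux H f (compf H f α β h1) γ h2) hB]
      rw [compf_incl₂ H f α (compf H f β γ h3) h4]
      rw [comp_congr H rfl (compf_incl₂ H f β γ h3) (compf_aux H f α (compf H f β γ h3) h4) hD]
      exact H.comp_assoc _ _ _ hA hB hC hD
    · rw [compf_incl₃, compf_incl₃, compf_incl₃]
  comp_inv := by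
    intro R _ α h
    apply hom_ext H f
    · rw [compf_incl₁, RingHom.comp_assoc (incl₁ H f) (εf H f) (α.comp (incl₁ H f)),
        εf_incl₁, RingHom.comp_id]
    · rw [compf_incl₂]
      have e : (α.comp (cf H f)).comp (incl₂ H f) = (α.comp (incl₂ H f)).comp H.c := by
        rw [RingHom.comp_assoc (incl₂ H f) (cf H f) α, cf_incl₂,
          ← RingHom.comp_assoc H.c (incl₂ H f) α]
      rw [comp_congr H rfl e _ (by rw [← e]; exact compf_aux H f α (α.comp (cf H f)) h),
        H.comp_inv (α.comp (incl₂ H f))]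
      exact (eL H f α).symm
    · rw [compf_incl₃, RingHom.comp_assoc (incl₃ H f) (cf H f) α, cf_incl₃,
        RingHom.comp_assoc (incl₃ H f) (εf H f) (α.comp (incl₁ H f)), εf_incl₃,
        RingHom.comp_id]

noncomputable def mf : HopfAlgebroidMap H (Hf H f) where
  f₀ := f
  f₁ := incl₂ H f
  ηL_comm := incl₂_ηL H f
  ηR_comm := incl₂_ηR H f
  ε_comm := (εf_incl₂ H f).symm
  c_comm := (cf_incl₂ H f).symm
  comp_comm := by
    intro R _ α β h h'
    show (compf H f α β h).comp (incl₂ H f) = _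
    rw [compf_incl₂ H f α β h]

variable {Sg : Type u} [CommRing Sg] {K : HopfAlgebroid B Sg}

lemma canonicalMapStep_inclB (φ : HopfAlgebroidMap H K) (b : B) :
    canonicalMapStep φ ((inclB H φ.f₀) b) = K.ηR b := by
  letI := φ.f₀.toAlgebra
  letI := H.ηR.toAlgebra
  letI : Algebra A Sg := (φ.f₁.comp H.ηR).toAlgebra
  unfold canonicalMapStep inclB
  show (Algebra.TensorProduct.productMap _ _) ((1 : Γ) ⊗ₜ[A] b) = K.ηR b
  rw [Algebra.TensorProduct.productMap_right_apply]
  rfl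

lemma canonicalMap_incl₁ (φ : HopfAlgebroidMap H K) :
    (canonicalMap φ).comp (incl₁ H φ.f₀) = K.ηL := by
  letI := φ.f₀.toAlgebra
  letI := ((inclGamma H φ.f₀).comp H.ηL).toAlgebra
  letI : Algebra A Sg := (K.ηL.comp φ.f₀).toAlgebra
  ext b
  show canonicalMap φ (b ⊗ₜ[A] (1 : GammaB H φ.f₀)) = K.ηL b
  unfold canonicalMap
  show (Algebra.TensorProduct.productMap _ _) (b ⊗ₜ[A] (1 : GammaB H φ.f₀)) = K.ηL b
  rw [Algebra.TensorProduct.productMap_left_apply]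
  rfl

lemma canonicalMap_incl₂ (φ : HopfAlgebroidMap H K) :
    (canonicalMap φ).comp (incl₂ H φ.f₀) = φ.f₁ := by
  letI := φ.f₀.toAlgebra
  letI := ((inclGamma H φ.f₀).comp H.ηL).toAlgebra
  letI : Algebra A Sg := (K.ηL.comp φ.f₀).toAlgebra
  ext x
  show canonicalMap φ ((1 : B) ⊗ₜ[A] (inclGamma H φ.f₀ x)) = φ.f₁ x
  unfold canonicalMap
  show (Algebra.TensorProduct.productMap _ _) ((1 : B) ⊗ₜ[A] (inclGamma H φ.f₀ x)) = φ.f₁ x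
  rw [Algebra.TensorProduct.productMap_right_apply]
  exact canonicalMapStep_incl φ x

lemma canonicalMap_incl₃ (φ : HopfAlgebroidMap H K) :
    (canonicalMap φ).comp (incl₃ H φ.f₀) = K.ηR := by
  letI := φ.f₀.toAlgebra
  letI := ((inclGamma H φ.f₀).comp H.ηL).toAlgebra
  letI : Algebra A Sg := (K.ηL.comp φ.f₀).toAlgebra
  ext b
  show canonicalMap φ ((1 : B) ⊗ₜ[A] (inclB H φ.f₀ b)) = K.ηR b
  unfold canonicalMap
  show (Algebra.TensorProduct.productMap _ _) ((1 : B) ⊗ₜ[A] (inclB H φ.f₀ b)) = K.ηR b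
  rw [Algebra.TensorProduct.productMap_right_apply]
  exact canonicalMapStep_inclB H φ b

lemma canonicalMap_mf : canonicalMap (mf H f) = RingHom.id (BGammaB H f) := by
  apply hom_ext H f
  · rw [RingHom.id_comp]
    exact canonicalMap_incl₁ H (mf H f)
  · rw [RingHom.id_comp]
    exact canonicalMap_incl₂ H (mf H f)
  · rw [RingHom.id_comp]
    exact canonicalMap_incl₃ H (mf H f)

lemma canonicalMap_mf_bijective : Function.Bijective (canonicalMap (mf H f)) := by
  rw [canonicalMap_mf]
  exact Function.bijective_id

end Ext15
theorem extended_hopf_algebroid_exists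
    {A Γ B : Type u} [CommRing A] [CommRing Γ] [CommRing B]
    (H : HopfAlgebroid A Γ) (f : A →+* B) :
    ∃ (Hf : HopfAlgebroid B (BGammaB H f)) (m : HopfAlgebroidMap H Hf),
      m.f₀ = f ∧
      m.f₁ = incl₂ H f ∧
      Hf.ηL = incl₁ H f ∧
      Hf.ηR = incl₃ H f ∧
      Hf.ε.comp (incl₁ H f) = RingHom.id B ∧
      Hf.ε.comp (incl₂ H f) = f.comp H.ε ∧
      Hf.ε.comp (incl₃ H f) = RingHom.id B ∧
      Hf.c.comp (incl₁ H f) = incl₃ H f ∧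
      Hf.c.comp (incl₂ H f) = (incl₂ H f).comp H.c ∧
      Hf.c.comp (incl₃ H f) = incl₁ H f ∧
      (∀ (R : Type u) [CommRing R] (α β : BGammaB H f →+* R)
        (h : α.comp Hf.ηR = β.comp Hf.ηL)
        (h' : (α.comp (incl₂ H f)).comp H.ηR = (β.comp (incl₂ H f)).comp H.ηL),
        (Hf.comp α β h).comp (incl₁ H f) = α.comp (incl₁ H f) ∧
        (Hf.comp α β h).comp (incl₃ H f) = β.comp (incl₃ H f) ∧
        (Hf.comp α β h).comp (incl₂ H f) =
          H.comp (α.comp (incl₂ H f)) (β.comp (incl₂ H f)) h') ∧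
      Function.Bijective (canonicalMap m) := by
  refine ⟨Ext15.Hf H f, Ext15.mf H f, rfl, rfl, rfl, rfl,
    Ext15.εf_incl₁ H f, Ext15.εf_incl₂ H f, Ext15.εf_incl₃ H f,
    Ext15.cf_incl₁ H f, Ext15.cf_incl₂ H f, Ext15.cf_incl₃ H f, ?_, ?_⟩
  · intro R _ α β h h'
    refine ⟨Ext15.compf_incl₁ H f α β h, Ext15.compf_incl₃ H f α β h, ?_⟩
    show (Ext15.compf H f α β h).comp (incl₂ H f) = _
    rw [Ext15.compf_incl₂ H f α β h]
  · exact Ext15.canonicalMap_mf_bijective H f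
end
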